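/- arXiv:2206.11852 — 3 statements merged into one kernel-verified Lean document; each statement's English description precedes it below -/
import Mathlib

section
/- The robustness of the three-qubit GHZ state relative to the fully separable states equals 2: R_FS(|GHZ⟩⟨GHZ|) = 2, where |GHZ⟩ = (|000⟩+|111⟩)/√2 in (ℂ²)^{⊗3}. -/
open Matrix Finset
open scoped ComplexOrder

attribute [local instance] Classical.propDecidable

noncomputable section

/-- The rank-one matrix `|v⟩⟨v|` associated to a vector `v`. -/
def vecProj {D : Type*} [Fintype D] (v : D → ℂ) : Matrix D D ℂ :=
  Matrix.of fun i j => v i * star (v j)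

/-- `v` is a unit vector. -/
def UnitVec {D : Type*} [Fintype D] (v : D → ℂ) : Prop :=
  ∑ i, star (v i) * v i = 1

/-- A quantum state: positive semidefinite matrix of trace one. -/
def IsState {D : Type*} [Fintype D] [DecidableEq D] (ρ : Matrix D D ℂ) : Prop :=
  ρ.PosSemidef ∧ ρ.trace = 1

/-- A vector on a multipartite system is fully product if it is a tensor product of
single-party vectors. -/
def IsProdVec {ι : Type*} [Fintype ι] {Idx : ι → Type*} (v : (∀ i, Idx i) → ℂ) : Prop :=
  ∃ ψ : ∀ i, Idx i → ℂ, ∀ f, v f = ∏ i, ψ i (f i)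

/-- A vector on a multipartite system is biseparable if it is a product across some
bipartition of the parties into a nonempty proper subset `M` and its complement. -/
def IsBisepVec {ι : Type*} [Fintype ι] {Idx : ι → Type*} (v : (∀ i, Idx i) → ℂ) : Prop :=
  ∃ M : Finset ι, M.Nonempty ∧ M ≠ Finset.univ ∧
    ∃ (a : ((j : {j : ι // j ∈ M}) → Idx j.1) → ℂ)
      (b : ((j : {j : ι // j ∉ M}) → Idx j.1) → ℂ),
      ∀ f, v f = a (fun j => f j.1) * b (fun j => f j.1)

/-- Fully separable states: finite convex combinations of fully product pure states. -/
def FullySepState {ι : Type*} [Fintype ι] [DecidableEq ι] (Idx : ι → Type*)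
    [∀ i, Fintype (Idx i)] (ρ : Matrix (∀ i, Idx i) (∀ i, Idx i) ℂ) : Prop :=
  ∃ (m : ℕ) (w : Fin m → ℝ) (u : Fin m → (∀ i, Idx i) → ℂ),
    (∀ k, 0 ≤ w k) ∧ (∑ k, w k = 1) ∧
    (∀ k, UnitVec (u k) ∧ IsProdVec (u k)) ∧
    ρ = ∑ k, (w k : ℂ) • vecProj (u k)

/-- Biseparable states: finite convex combinations of biseparable pure states. -/
def BisepState {ι : Type*} [Fintype ι] [DecidableEq ι] (Idx : ι → Type*)
    [∀ i, Fintype (Idx i)] (ρ : Matrix (∀ i, Idx i) (∀ i, Idx i) ℂ) : Prop :=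
  ∃ (m : ℕ) (w : Fin m → ℝ) (u : Fin m → (∀ i, Idx i) → ℂ),
    (∀ k, 0 ≤ w k) ∧ (∑ k, w k = 1) ∧
    (∀ k, UnitVec (u k) ∧ IsBisepVec (u k)) ∧
    ρ = ∑ k, (w k : ℂ) • vecProj (u k)

/-- Robustness of `ρ` relative to the set `S`: the least `s ≥ 0` such that mixing `ρ`
with some state `σ ∈ S` with weight `s` (normalised) lands in `S`. -/
def Robustness {D : Type*} [Fintype D] [DecidableEq D]
    (S : Set (Matrix D D ℂ)) (ρ : Matrix D D ℂ) : ℝ :=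
  sInf {s : ℝ | 0 ≤ s ∧ ∃ σ, IsState σ ∧ σ ∈ S ∧
    (((1 + s)⁻¹ : ℝ) : ℂ) • (ρ + (s : ℂ) • σ) ∈ S}

/-- The three-qubit GHZ vector `(|000⟩ + |111⟩)/√2`. -/
def ghzVec : (Fin 3 → Fin 2) → ℂ := fun f =>
  if f = (fun _ => (0 : Fin 2)) ∨ f = (fun _ => (1 : Fin 2)) then
    (((Real.sqrt 2)⁻¹ : ℝ) : ℂ) else 0

/-- The three-qubit W vector `(|001⟩ + |010⟩ + |100⟩)/√3`. -/
def wVec : (Fin 3 → Fin 2) → ℂ := fun f =>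
  if (∑ i, ((f i : ℕ))) = 1 then (((Real.sqrt 3)⁻¹ : ℝ) : ℂ) else 0

/-!
Upper bound: averaging the product states `⊗ⱼ (|0⟩ + i^{θⱼ}|1⟩)/√2` over the sixteen phase
triples with `θ₀ + θ₁ + θ₂ = r (mod 4)` kills every coherence except `|000⟩⟨111|` and its
adjoint, giving the fully separable states `τᵣ = (1 + i^{-r}|000⟩⟨111| + i^r|111⟩⟨000|)/8`.
Then `(GHZ + 2 τ₂)/3 = (2/3) τ₀ + (|000⟩⟨000| + |111⟩⟨111|)/6` is fully separable.

Lower bound: the functional `W ρ = (tr ρ - ρ₀₀₀,₀₀₀ - ρ₁₁₁,₁₁₁)/6 - Re ρ₀₀₀,₁₁₁` equals `-1/2`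
on GHZ and lies in `[0, 1/4]` on product states: with `A = |ψ₀₀₀|`, `B = |ψ₁₁₁|`, each of the
three pairs of complementary middle diagonal entries is at least `2AB` by AM–GM, and `AB ≤ 1/8`.
By convexity the same holds on fully separable states, so if `(GHZ + sσ)/(1+s)` is fully
separable then `0 ≤ -1/2 + s/4`.
-/

section PureStates

variable {D : Type*} [Fintype D]

lemma vecProj_eq_vecMulVec (v : D → ℂ) : vecProj v = vecMulVec v (star v) := rfl

lemma trace_vecProj {v : D → ℂ} (hv : UnitVec v) : (vecProj v).trace = 1 := by
  rw [vecProj_eq_vecMulVec, trace_vecMulVec, ← hv]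
  exact Finset.sum_congr rfl fun i _ => mul_comm _ _

lemma isState_vecProj [DecidableEq D] {v : D → ℂ} (hv : UnitVec v) : IsState (vecProj v) :=
  ⟨posSemidef_vecMulVec_self_star v, trace_vecProj hv⟩

lemma vecProj_single [DecidableEq D] (x : D) : vecProj (Pi.single x 1 : D → ℂ) = single x x 1 := by
  ext i j
  by_cases hi : x = i <;> by_cases hj : x = j <;>
    simp [vecProj, single_apply, Pi.single_apply, hi, hj, eq_comm]

lemma unitVec_single [DecidableEq D] (x : D) : UnitVec (Pi.single x 1 : D → ℂ) := by
  simp [UnitVec, Pi.single_apply]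

end PureStates

section Multipartite

variable {ι : Type*} [Fintype ι] {Idx : ι → Type*}

lemma isProdVec_single [∀ i, DecidableEq (Idx i)] (x : ∀ i, Idx i) :
    IsProdVec (Pi.single x 1 : (∀ i, Idx i) → ℂ) := by
  refine ⟨fun i => Pi.single (x i) 1, fun f => ?_⟩
  by_cases h : f = x
  · simp [h]
  · obtain ⟨i, hi⟩ := Function.ne_iff.mp h
    rw [Pi.single_eq_of_ne h, Finset.prod_eq_zero (Finset.mem_univ i) (Pi.single_eq_of_ne hi 1)]

variable [DecidableEq ι] [∀ i, Fintype (Idx i)]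

lemma sum_star_mul_self_prod (ψ : ∀ i, Idx i → ℂ) :
    ∑ f : ∀ i, Idx i, star (∏ i, ψ i (f i)) * ∏ i, ψ i (f i)
      = ∏ i, ∑ x, star (ψ i x) * ψ i x := by
  rw [Fintype.prod_sum]
  simp only [star_prod, ← Finset.prod_mul_distrib]

lemma unitVec_prod {ψ : ∀ i, Idx i → ℂ} (hψ : ∀ i, UnitVec (ψ i)) :
    UnitVec fun f : ∀ i, Idx i => ∏ i, ψ i (f i) := by
  simp only [UnitVec, sum_star_mul_self_prod]
  exact Finset.prod_eq_one fun i _ => hψ i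

lemma fullySepState_sum {κ : Type*} [Fintype κ] {w : κ → ℝ} {u : κ → (∀ i, Idx i) → ℂ}
    (hw : ∀ k, 0 ≤ w k) (hw₁ : ∑ k, w k = 1) (hu : ∀ k, UnitVec (u k) ∧ IsProdVec (u k)) :
    FullySepState Idx (∑ k, (w k : ℂ) • vecProj (u k)) := by
  let e := (Fintype.equivFin κ).symm
  exact ⟨_, w ∘ e, u ∘ e, fun k => hw _, (e.sum_comp w).trans hw₁, fun k => hu _,
    (e.sum_comp fun k => (w k : ℂ) • vecProj (u k)).symm⟩

lemma fullySepState_vecProj {u : (∀ i, Idx i) → ℂ} (hu : UnitVec u) (hp : IsProdVec u) :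
    FullySepState Idx (vecProj u) := by
  simpa using fullySepState_sum (κ := Unit) (w := 1) (u := fun _ => u) (by simp) (by simp)
    fun _ => ⟨hu, hp⟩

namespace FullySepState

variable {ρ ρ₁ ρ₂ : Matrix (∀ i, Idx i) (∀ i, Idx i) ℂ}

lemma isState (h : FullySepState Idx ρ) : IsState ρ := by
  obtain ⟨m, w, u, hw, hw₁, hu, rfl⟩ := h
  refine ⟨posSemidef_sum _ fun k _ => ?_, ?_⟩
  · exact (isState_vecProj (hu k).1).1.smul (Complex.zero_le_real.mpr (hw k))
  · simp [trace_sum, trace_vecProj (hu _).1, ← Complex.ofReal_sum, hw₁]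

lemma convexComb {a b : ℝ} (ha : 0 ≤ a) (hb : 0 ≤ b) (hab : a + b = 1)
    (h₁ : FullySepState Idx ρ₁) (h₂ : FullySepState Idx ρ₂) :
    FullySepState Idx ((a : ℂ) • ρ₁ + (b : ℂ) • ρ₂) := by
  obtain ⟨m₁, w₁, u₁, hw₁, hs₁, hu₁, rfl⟩ := h₁
  obtain ⟨m₂, w₂, u₂, hw₂, hs₂, hu₂, rfl⟩ := h₂
  convert fullySepState_sum (w := Sum.elim (a • w₁) (b • w₂)) (u := Sum.elim u₁ u₂)
    (Sum.forall.2 ⟨fun k => mul_nonneg ha (hw₁ k), fun k => mul_nonneg hb (hw₂ k)⟩)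
    (by simp [← Finset.mul_sum, hs₁, hs₂, hab]) (Sum.forall.2 ⟨hu₁, hu₂⟩) using 1
  simp [Finset.smul_sum, smul_smul]

lemma re_mem_Icc (L : Matrix (∀ i, Idx i) (∀ i, Idx i) ℂ →ₗ[ℂ] ℂ) {c : ℝ}
    (hL : ∀ u, UnitVec u → IsProdVec u → (L (vecProj u)).re ∈ Set.Icc 0 c)
    (hρ : FullySepState Idx ρ) : (L ρ).re ∈ Set.Icc 0 c := by
  obtain ⟨m, w, u, hw, hw₁, hu, rfl⟩ := hρ
  simp only [map_sum, map_smul, smul_eq_mul, Complex.re_sum, Complex.re_ofReal_mul]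
  exact (convex_Icc 0 c).sum_mem (fun k _ => hw k) hw₁ fun k _ => hL _ (hu k).1 (hu k).2

end FullySepState

end Multipartite

theorem robustness_eq_of_witness {D : Type*} [Fintype D] [DecidableEq D]
    {S : Set (Matrix D D ℂ)} {ρ σ : Matrix D D ℂ} {s c : ℝ} (L : Matrix D D ℂ →ₗ[ℂ] ℂ)
    (hc : 0 < c) (hL : ∀ τ ∈ S, (L τ).re ∈ Set.Icc 0 c) (hLρ : (L ρ).re = -(s * c))
    (hs : 0 ≤ s) (hσ : IsState σ) (hσS : σ ∈ S)
    (hmix : (((1 + s)⁻¹ : ℝ) : ℂ) • (ρ + (s : ℂ) • σ) ∈ S) :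
    Robustness S ρ = s := by
  refine IsLeast.csInf_eq ⟨⟨hs, σ, hσ, hσS, hmix⟩, ?_⟩
  rintro t ⟨ht, τ, -, hτ, hmixτ⟩
  have h₀ : 0 ≤ (1 + t)⁻¹ * (-(s * c) + t * (L τ).re) := by
    simpa only [map_smul, map_add, smul_eq_mul, Complex.re_ofReal_mul, Complex.add_re, hLρ]
      using (hL _ hmixτ).1
  have h₁ : s * c ≤ t * (L τ).re := by
    linarith [(mul_nonneg_iff_of_pos_left (by positivity)).1 h₀]
  exact le_of_mul_le_mul_right (h₁.trans (mul_le_mul_of_nonneg_left (hL τ hτ).2 ht)) hc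

lemma abs_prod_mul_prod_le {κ : Type*} (s : Finset κ) (a b : κ → ℝ) :
    |(∏ j ∈ s, a j) * ∏ j ∈ s, b j| ≤ ∏ j ∈ s, (a j ^ 2 + b j ^ 2) / 2 := by
  rw [← Finset.prod_mul_distrib, Finset.abs_prod]
  refine Finset.prod_le_prod (fun _ _ => abs_nonneg _) fun j _ => ?_
  rw [abs_mul, ← sq_abs (a j), ← sq_abs (b j)]
  linarith [two_mul_le_add_sq |a j| |b j|]

lemma ghzWitness_bounds_of_norms {a b : Fin 3 → ℝ} {R : ℝ}
    (hab : ∏ j, (a j ^ 2 + b j ^ 2) = 1) (hR : |R| ≤ (∏ j, a j) * ∏ j, b j) :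
    6⁻¹ * (1 - (∏ j, a j) ^ 2 - (∏ j, b j) ^ 2) - R ∈ Set.Icc 0 (1 / 4) := by
  have hAB : (∏ j, a j) * ∏ j, b j ≤ 1 / 8 := by
    have := (le_abs_self _).trans (abs_prod_mul_prod_le Finset.univ a b)
    rw [Finset.prod_div_distrib, hab, Finset.prod_const, Finset.card_univ, Fintype.card_fin] at this
    linarith
  rw [Fin.prod_univ_three] at hab
  simp only [Fin.prod_univ_three] at hR hAB ⊢
  obtain ⟨hR₁, hR₂⟩ := abs_le.mp hR
  constructor
  · nlinarith [sq_nonneg (a 0 * a 1 * b 2 - b 0 * b 1 * a 2),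
      sq_nonneg (a 0 * b 1 * a 2 - b 0 * a 1 * b 2), sq_nonneg (b 0 * a 1 * a 2 - a 0 * b 1 * b 2)]
  · nlinarith [sq_nonneg (a 0 * a 1 * a 2 - b 0 * b 1 * b 2)]

def ghzWitness : Matrix (Fin 3 → Fin 2) (Fin 3 → Fin 2) ℂ →ₗ[ℂ] ℂ :=
  (6 : ℂ)⁻¹ • (traceLinearMap _ ℂ ℂ - entryLinearMap ℂ ℂ 0 0 - entryLinearMap ℂ ℂ 1 1)
    - entryLinearMap ℂ ℂ 0 1

lemma ghzWitness_apply (ρ : Matrix (Fin 3 → Fin 2) (Fin 3 → Fin 2) ℂ) :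
    ghzWitness ρ = 6⁻¹ * (ρ.trace - ρ 0 0 - ρ 1 1) - ρ 0 1 := rfl

lemma ghzWitness_vecProj_mem_Icc {u : (Fin 3 → Fin 2) → ℂ} (hu : UnitVec u) (hp : IsProdVec u) :
    (ghzWitness (vecProj u)).re ∈ Set.Icc 0 (1 / 4) := by
  obtain ⟨ψ, hψ⟩ := hp
  have hnorm : ∏ j, (‖ψ j 0‖ ^ 2 + ‖ψ j 1‖ ^ 2) = 1 := by
    rw [UnitVec, funext hψ, sum_star_mul_self_prod] at hu
    simp only [Fin.sum_univ_two, Complex.star_def, ← Complex.normSq_eq_conj_mul_self,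
      Complex.normSq_eq_norm_sq] at hu
    exact_mod_cast hu
  have h₀ : ‖u 0‖ = ∏ j, ‖ψ j 0‖ := by rw [hψ, Complex.norm_prod]; rfl
  have h₁ : ‖u 1‖ = ∏ j, ‖ψ j 1‖ := by rw [hψ, Complex.norm_prod]; rfl
  have hR : |(u 0 * star (u 1)).re| ≤ (∏ j, ‖ψ j 0‖) * ∏ j, ‖ψ j 1‖ := by
    rw [← h₀, ← h₁, ← norm_star (u 1), ← norm_mul]
    exact Complex.abs_re_le_norm _
  convert ghzWitness_bounds_of_norms hnorm hR using 2
  rw [ghzWitness_apply, trace_vecProj hu, ← h₀, ← h₁]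
  simp [vecProj, Complex.mul_conj, Complex.normSq_eq_norm_sq, -Complex.ofReal_pow]

lemma ofReal_inv_sqrt_two_mul_self :
    (((Real.sqrt 2)⁻¹ : ℝ) : ℂ) * (((Real.sqrt 2)⁻¹ : ℝ) : ℂ) = 2⁻¹ := by
  rw [← Complex.ofReal_mul, ← mul_inv, Real.mul_self_sqrt zero_le_two]
  norm_num

lemma zero_ne_one_qubits : (0 : Fin 3 → Fin 2) ≠ 1 := by decide

lemma vecProj_ghzVec : vecProj ghzVec
    = (2⁻¹ : ℂ) • (single 0 0 1 + single 0 1 1 + single 1 0 1 + single 1 1 1) := by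
  ext f g
  have h0 : (fun _ => (0 : Fin 2)) = (0 : Fin 3 → Fin 2) := rfl
  have h1 : (fun _ => (1 : Fin 2)) = (1 : Fin 3 → Fin 2) := rfl
  simp only [vecProj, ghzVec, of_apply, h0, h1, Matrix.smul_apply, Matrix.add_apply,
    Matrix.single_apply, Complex.star_def]
  by_cases hf0 : f = 0 <;> by_cases hf1 : f = 1 <;> by_cases hg0 : g = 0 <;>
    by_cases hg1 : g = 1 <;>
    simp_all [eq_comm, zero_ne_one_qubits, ofReal_inv_sqrt_two_mul_self, -Complex.ofReal_inv]

lemma ghzWitness_ghz : ghzWitness (vecProj ghzVec) = -2⁻¹ := by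
  rw [ghzWitness_apply, vecProj_ghzVec]
  simp [zero_ne_one_qubits, zero_ne_one_qubits.symm]

-- `ω θ = i ^ θ.val`
local notation "ω" => (ZMod.stdAddChar : AddChar (ZMod 4) ℂ)

lemma stdAddChar_two : ω 2 = -1 := by
  have := ZMod.stdAddChar_coe (N := 4) 2
  push_cast at this
  rw [this, show 2 * (Real.pi : ℂ) * Complex.I * 2 / 4 = Real.pi * Complex.I by ring,
    Complex.exp_pi_mul_I]

def phaseQubit (θ : ZMod 4) : Fin 2 → ℂ := fun x => (((Real.sqrt 2)⁻¹ : ℝ) : ℂ) * ω (θ * (x : ℕ))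

lemma phaseQubit_mul_star (θ : ZMod 4) (x y : Fin 2) :
    phaseQubit θ x * star (phaseQubit θ y) = 2⁻¹ * ω (θ * ((x : ℕ) - (y : ℕ))) := by
  rw [phaseQubit, phaseQubit, star_mul', Complex.star_def, Complex.conj_ofReal,
    ← AddChar.map_neg_eq_conj, mul_sub, sub_eq_add_neg, AddChar.map_add_eq_mul,
    ← ofReal_inv_sqrt_two_mul_self]
  ring

lemma unitVec_phaseQubit (θ : ZMod 4) : UnitVec (phaseQubit θ) := by
  simp only [UnitVec, mul_comm (star _), phaseQubit_mul_star, sub_self, mul_zero,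
    AddChar.map_zero_eq_one, Fin.sum_univ_two]
  norm_num

def phaseVec (θ : Fin 3 → ZMod 4) : (Fin 3 → Fin 2) → ℂ := fun f => ∏ j, phaseQubit (θ j) (f j)

lemma vecProj_phaseVec_apply (θ : Fin 3 → ZMod 4) (f g : Fin 3 → Fin 2) :
    vecProj (phaseVec θ) f g = 8⁻¹ * ω (∑ j, θ j * ((f j : ℕ) - (g j : ℕ))) := by
  simp only [vecProj, phaseVec, of_apply, star_prod, ← Finset.prod_mul_distrib, phaseQubit_mul_star]
  simp only [Fin.prod_univ_three, Fin.sum_univ_three, AddChar.map_add_eq_mul]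
  ring

def ghzDephased (r : ZMod 4) : Matrix (Fin 3 → Fin 2) (Fin 3 → Fin 2) ℂ :=
  ∑ θ : ZMod 4 × ZMod 4, ((16⁻¹ : ℝ) : ℂ) • vecProj (phaseVec ![θ.1, θ.2, r - θ.1 - θ.2])

lemma fullySepState_ghzDephased (r : ZMod 4) :
    FullySepState (fun _ : Fin 3 => Fin 2) (ghzDephased r) :=
  fullySepState_sum (fun _ => by norm_num) (by simp)
    fun _ => ⟨unitVec_prod fun _ => unitVec_phaseQubit _, _, fun _ => rfl⟩

lemma ghzDephased_apply (r : ZMod 4) (f g : Fin 3 → Fin 2) :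
    ghzDephased r f g = if ((f 0 : ℕ) : ZMod 4) - (g 0 : ℕ) = (f 2 : ℕ) - (g 2 : ℕ) ∧
        ((f 1 : ℕ) : ZMod 4) - (g 1 : ℕ) = (f 2 : ℕ) - (g 2 : ℕ)
      then 8⁻¹ * ω (r * ((f 2 : ℕ) - (g 2 : ℕ))) else 0 := by
  obtain ⟨d, hd⟩ : ∃ d : Fin 3 → ZMod 4, ∀ j, ((f j : ℕ) : ZMod 4) - (g j : ℕ) = d j :=
    ⟨_, fun _ => rfl⟩
  have hphase : ∀ m n : ZMod 4, ∑ j, ![m, n, r - m - n] j * d j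
      = m * (d 0 - d 2) + n * (d 1 - d 2) + r * d 2 := fun m n => by
    simp [Fin.sum_univ_three]
    ring
  have hsum := fun b : ZMod 4 => AddChar.sum_mulShift b (ZMod.isPrimitive_stdAddChar 4)
  simp only [ghzDephased, Matrix.sum_apply, Matrix.smul_apply, vecProj_phaseVec_apply, hphase,
    smul_eq_mul, AddChar.map_add_eq_mul, Fintype.sum_prod_type, hd]
  calc _ = 128⁻¹ * ω (r * d 2) *
        ((∑ m : ZMod 4, ω (m * (d 0 - d 2))) * ∑ n : ZMod 4, ω (n * (d 1 - d 2))) := by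
        rw [Finset.sum_mul_sum, Finset.mul_sum]
        refine Finset.sum_congr rfl fun m _ => ?_
        rw [Finset.mul_sum]
        refine Finset.sum_congr rfl fun n _ => ?_
        push_cast
        ring
    _ = _ := by
        rw [hsum, hsum, ZMod.card]
        by_cases h₀ : d 0 = d 2 <;> by_cases h₁ : d 1 = d 2 <;> simp [h₀, h₁, sub_eq_zero]
        ring

lemma val_sub_const_iff (f g : Fin 3 → Fin 2) :
    (((f 0 : ℕ) : ZMod 4) - (g 0 : ℕ) = (f 2 : ℕ) - (g 2 : ℕ) ∧
        ((f 1 : ℕ) : ZMod 4) - (g 1 : ℕ) = (f 2 : ℕ) - (g 2 : ℕ))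
      ↔ f = g ∨ f = 0 ∧ g = 1 ∨ f = 1 ∧ g = 0 := by
  revert f g
  decide

lemma ghzDephased_eq (r : ZMod 4) :
    ghzDephased r = (8⁻¹ : ℂ) • (1 + ω (-r) • single 0 1 1 + ω r • single 1 0 1) := by
  ext f g
  rw [ghzDephased_apply]
  simp only [Matrix.smul_apply, Matrix.add_apply, one_apply, single_apply, smul_eq_mul]
  by_cases h : f = g ∨ f = 0 ∧ g = 1 ∨ f = 1 ∧ g = 0
  · rw [if_pos ((val_sub_const_iff f g).2 h)]
    rcases h with rfl | ⟨rfl, rfl⟩ | ⟨rfl, rfl⟩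
    · simp only [sub_self, mul_zero, AddChar.map_zero_eq_one]
      grind [zero_ne_one_qubits]
    all_goals simp [zero_ne_one_qubits, zero_ne_one_qubits.symm]
  · rw [if_neg (mt (val_sub_const_iff f g).1 h)]
    split_ifs <;> simp_all [eq_comm]

lemma ghz_mix_dephased_eq :
    (((1 + 2)⁻¹ : ℝ) : ℂ) • (vecProj ghzVec + ((2 : ℝ) : ℂ) • ghzDephased 2)
      = ((2 / 3 : ℝ) : ℂ) • ghzDephased 0 + ((1 / 3 : ℝ) : ℂ) •
        (((1 / 2 : ℝ) : ℂ) • vecProj (Pi.single 0 1) + ((1 / 2 : ℝ) : ℂ) • vecProj (Pi.single 1 1)) := by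
  have hneg : (-2 : ZMod 4) = 2 := by decide
  rw [ghzDephased_eq, ghzDephased_eq, vecProj_ghzVec, vecProj_single, vecProj_single, hneg,
    stdAddChar_two, neg_zero, AddChar.map_zero_eq_one]
  push_cast
  module

/-- The robustness of the three-qubit GHZ state relative to the fully separable
states equals 2. -/
theorem robustness_GHZ :
    Robustness {ρ | FullySepState (fun _ : Fin 3 => Fin 2) ρ} (vecProj ghzVec) = 2 := by
  have hpure : ∀ x, FullySepState (fun _ : Fin 3 => Fin 2) (vecProj (Pi.single x 1)) :=
    fun x => fullySepState_vecProj (unitVec_single x) (isProdVec_single x)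
  refine robustness_eq_of_witness ghzWitness (c := 1 / 4) (by norm_num)
    (fun τ hτ => FullySepState.re_mem_Icc _ (fun _ => ghzWitness_vecProj_mem_Icc) hτ)
    (by rw [ghzWitness_ghz]; norm_num) zero_le_two (fullySepState_ghzDephased 2).isState
    (fullySepState_ghzDephased 2) ?_
  rw [Set.mem_ofPred_eq, ghz_mix_dephased_eq]
  exact .convexComb (by norm_num) (by norm_num) (by norm_num) (fullySepState_ghzDephased 0)
    (.convexComb (by norm_num) (by norm_num) (by norm_num) (hpure 0) (hpure 1))
end
end

section
/- Existence of a unique maximally GME state under biseparability-preserving maps: let n ≥ 2, d ≥ 2, and let |GHZ(n,d)⟩ = (1/√d)∑_{i=0}^{d−1}|i⟩^{⊗n} in (ℂ^d)^{⊗n}. For every unit vector |ψ⟩ ∈ (ℂ^d)^{⊗n} there exists a CPTP biseparability-preserving map Λ such that Λ(|GHZ(n,d)⟩⟨GHZ(n,d)|) = |ψ⟩⟨ψ|. -/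
open Matrix Finset
open scoped ComplexOrder

attribute [local instance] Classical.propDecidable

noncomputable section

/-- Completely positive, trace non-increasing map, given by a finite Kraus decomposition
with `∑ Kᵢ† Kᵢ ≤ 𝟙`. -/
def IsCPTNI {D : Type*} [Fintype D] [DecidableEq D]
    (Λ : Matrix D D ℂ → Matrix D D ℂ) : Prop :=
  ∃ (m : ℕ) (K : Fin m → Matrix D D ℂ),
    (∀ ρ, Λ ρ = ∑ i, K i * ρ * (K i)ᴴ) ∧
    ((1 : Matrix D D ℂ) - ∑ i, (K i)ᴴ * K i).PosSemidef

/-- Completely positive trace preserving map, given by a finite Kraus decomposition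
with `∑ Kᵢ† Kᵢ = 𝟙`. -/
def IsCPTP {D : Type*} [Fintype D] [DecidableEq D]
    (Λ : Matrix D D ℂ → Matrix D D ℂ) : Prop :=
  ∃ (m : ℕ) (K : Fin m → Matrix D D ℂ),
    (∀ ρ, Λ ρ = ∑ i, K i * ρ * (K i)ᴴ) ∧
    (∑ i, (K i)ᴴ * K i = 1)

/-- `Λ` preserves the set `S` of states: for every state `σ ∈ S` with `tr Λ(σ) ≠ 0`,
the normalised output lies in `S`. -/
def PreservesSet {D : Type*} [Fintype D] [DecidableEq D]
    (Λ : Matrix D D ℂ → Matrix D D ℂ) (S : Set (Matrix D D ℂ)) : Prop :=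
  ∀ σ, IsState σ → σ ∈ S → (Λ σ).trace ≠ 0 → ((Λ σ).trace)⁻¹ • Λ σ ∈ S

/-- The generalised GHZ vector `(1/√d) ∑ᵢ |i⟩^{⊗n}`. -/
def ghzVecND (n d : ℕ) : (Fin n → Fin d) → ℂ := fun f =>
  if ∃ c : Fin d, f = fun _ => c then (((Real.sqrt d)⁻¹ : ℝ) : ℂ) else 0


namespace BSPaux

/-- primitive cube root of unity -/
def ω : ℂ := ⟨-1/2, Real.sqrt 3 / 2⟩

lemma sqrt3_sq : Real.sqrt 3 * Real.sqrt 3 = 3 := Real.mul_self_sqrt (by norm_num)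

lemma sqrt3_pow : Real.sqrt 3 ^ 2 = 3 := Real.sq_sqrt (by norm_num)

lemma ω_sum : 1 + ω + ω^2 = 0 := by
  apply Complex.ext <;>
    simp [ω, pow_two, Complex.add_re, Complex.mul_re, Complex.mul_im, sqrt3_sq,
      sqrt3_pow] <;> ring_nf <;> nlinarith [sqrt3_sq, sqrt3_pow]

lemma ω_pow3 : ω^3 = 1 := by linear_combination (ω - 1) * ω_sum

lemma normSq_ω : Complex.normSq ω = 1 := by
  simp [Complex.normSq_apply, ω]
  nlinarith [sqrt3_sq]

lemma ω_ne_zero : ω ≠ 0 := by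
  intro h
  have h2 := normSq_ω
  rw [h] at h2
  simp at h2

lemma ω_ne_one : ω ≠ 1 := by
  intro h
  have h2 : Real.sqrt 3 / 2 = 0 := by simpa [ω] using congrArg Complex.im h
  have h3 := Real.sqrt_pos.2 (show (0:ℝ) < 3 by norm_num)
  linarith

lemma ω_sq_ne_one : ω^2 ≠ 1 := by
  intro h
  have h3 : ω * ω^2 = 1 := by rw [← pow_succ']; exact ω_pow3
  rw [h, mul_one] at h3
  exact ω_ne_one h3

/-- the character of `ZMod 3` -/
def χ (z : ZMod 3) : ℂ := ω ^ z.val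

lemma ω_pow_mod (a : ℕ) : ω ^ (a % 3) = ω ^ a := by
  conv_rhs => rw [← Nat.div_add_mod a 3]
  rw [pow_add, pow_mul, ω_pow3, one_pow, one_mul]

lemma χ_add (x y : ZMod 3) : χ (x + y) = χ x * χ y := by
  unfold χ
  rw [← pow_add, ZMod.val_add, ω_pow_mod]

lemma χ_zero : χ 0 = 1 := by simp [χ]

lemma χ_one : χ 1 = ω := by
  have : (1 : ZMod 3).val = 1 := rfl
  simp [χ, this]

lemma χ_two : χ 2 = ω^2 := by
  have : (2 : ZMod 3).val = 2 := rfl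
  simp [χ, this]

lemma χ_ne_zero (z : ZMod 3) : χ z ≠ 0 := pow_ne_zero _ ω_ne_zero

lemma χ_star (z : ZMod 3) : star (χ z) = χ (-z) := by
  have h1 : χ z * χ (-z) = 1 := by rw [← χ_add]; simp [χ_zero]
  have h2 : star (χ z) * χ z = 1 := by
    rw [Complex.star_def, mul_comm, Complex.mul_conj]
    unfold χ
    rw [map_pow, normSq_ω]
    norm_num
  calc star (χ z) = star (χ z) * (χ z * χ (-z)) := by rw [h1, mul_one]
    _ = (star (χ z) * χ z) * χ (-z) := by ring
    _ = χ (-z) := by rw [h2, one_mul]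

lemma χ_ne_one (z : ZMod 3) (hz : z ≠ 0) : χ z ≠ 1 := by
  have h3 : z = 1 ∨ z = 2 := by revert hz; revert z; decide
  rcases h3 with h | h <;> subst h
  · rw [χ_one]; exact ω_ne_one
  · rw [χ_two]; exact ω_sq_ne_one

/-- Character sum over all phase assignments vanishes unless the coefficient vector is 0. -/
lemma char_sum {ι : Type*} [Fintype ι] [DecidableEq ι] (m : ι → ZMod 3) :
    ∑ θ : ι → ZMod 3, χ (∑ i, m i * θ i)
      = if m = 0 then (3 ^ Fintype.card ι : ℂ) else 0 := by
  by_cases hm : m = 0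
  · subst hm
    simp only [Pi.zero_apply, zero_mul, Finset.sum_const_zero, χ_zero, if_pos rfl]
    rw [Finset.sum_const, Finset.card_univ]
    simp [Fintype.card_pi, Fintype.card_fun]
  · rw [if_neg hm]
    obtain ⟨i₀, hi₀⟩ : ∃ i, m i ≠ 0 := by
      by_contra h
      push_neg at h
      exact hm (funext h)
    set δ : ι → ZMod 3 := Pi.single i₀ (1 : ZMod 3) with hδ
    set S := ∑ θ : ι → ZMod 3, χ (∑ i, m i * θ i) with hS
    have key : ∀ θ : ι → ZMod 3, (∑ i, m i * (θ + δ) i) = m i₀ + ∑ i, m i * θ i := by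
      intro θ
      have e1 : ∀ i, m i * (θ + δ) i = m i * θ i + (Pi.single i₀ (m i₀) : ι → ZMod 3) i := by
        intro i
        by_cases h : i = i₀
        · subst h; simp [hδ, mul_add]
        · simp [hδ, Pi.single_eq_of_ne h, mul_add]
      rw [Finset.sum_congr rfl (fun i _ => e1 i), Finset.sum_add_distrib,
        Fintype.sum_pi_single']
      ring
    have hshift : S = χ (m i₀) * S := by
      conv_lhs => rw [hS, ← Equiv.sum_comp (Equiv.addRight δ)
        (fun θ => χ (∑ i, m i * θ i))]
      have : ∀ θ : ι → ZMod 3, χ (∑ i, m i * (Equiv.addRight δ θ) i)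
          = χ (m i₀) * χ (∑ i, m i * θ i) := by
        intro θ
        show χ (∑ i, m i * (θ + δ) i) = _
        rw [key, χ_add]
      rw [Finset.sum_congr rfl (fun θ _ => this θ), ← Finset.mul_sum]
    have hz : (χ (m i₀) - 1) * S = 0 := by linear_combination -hshift
    rcases mul_eq_zero.1 hz with h | h
    · exact absurd (sub_eq_zero.1 h) (χ_ne_one _ hi₀)
    · exact h

end BSPaux
namespace BSPaux2

variable {α : Type*} [Fintype α] [DecidableEq α]

/-- outer product |u⟩⟨v| -/
def outer (u v : α → ℂ) : Matrix α α ℂ := Matrix.of fun i j => u i * star (v j)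

omit [Fintype α] [DecidableEq α] in
lemma outer_apply (u v : α → ℂ) (i j : α) : outer u v i j = u i * star (v j) := rfl

omit [Fintype α] [DecidableEq α] in
lemma outer_conjTranspose (u v : α → ℂ) : (outer u v)ᴴ = outer v u := by
  ext i j
  simp [outer, conjTranspose_apply, mul_comm]

/-- ⟨v|w⟩ -/
def dotc (v w : α → ℂ) : ℂ := ∑ k, star (v k) * w k

lemma outer_mul_outer (a b c e : α → ℂ) :
    outer a b * outer c e = dotc b c • outer a e := by
  ext i j
  simp only [mul_apply, outer_apply, Matrix.smul_apply, smul_eq_mul, dotc, Finset.sum_mul]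
  exact Finset.sum_congr rfl fun k _ => by ring

lemma outer_mul_mul (a b c e : α → ℂ) (ρ : Matrix α α ℂ) :
    outer a b * ρ * (outer c e)ᴴ = (∑ k, ∑ l, star (b k) * ρ k l * e l) • outer a c := by
  rw [outer_conjTranspose]
  ext i j
  simp only [mul_apply, outer_apply, Matrix.smul_apply, smul_eq_mul, Finset.sum_mul]
  rw [Finset.sum_comm]
  exact Finset.sum_congr rfl fun l _ => Finset.sum_congr rfl fun k _ => by ring

/-- pointwise-zero pair condition -/
lemma pair_indicator {d : ℕ} (b c b' c' : Fin d)
    (h : ∀ i : Fin d, ((if b = i then 1 else 0) + (if c' = i then 1 else 0) : ZMod 3)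
        = (if c = i then 1 else 0) + (if b' = i then 1 else 0)) :
    (b = c ∧ b' = c') ∨ (b = b' ∧ c = c') := by
  by_cases hbc : b = c
  · subst hbc
    left
    refine ⟨rfl, ?_⟩
    have h2 : ∀ i, ((if c' = i then 1 else 0 : ZMod 3)) = (if b' = i then 1 else 0) :=
      fun i => by linear_combination h i
    have h3 := h2 c'
    rw [if_pos rfl] at h3
    by_cases hb : b' = c'
    · exact hb
    · rw [if_neg hb] at h3
      exact absurd h3 (by decide)
  · have h1 := h b
    rw [if_pos rfl, if_neg (fun h' : c = b => hbc h'.symm)] at h1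
    have hb : b = b' := by
      by_cases hc' : c' = b <;> by_cases hb' : b' = b
      · exact hb'.symm
      · rw [if_pos hc', if_neg hb'] at h1
        exact absurd h1 (by decide)
      · exact hb'.symm
      · rw [if_neg hc', if_neg hb'] at h1
        exact absurd h1 (by decide)
    subst hb
    right
    refine ⟨rfl, ?_⟩
    have h2 : ∀ i, ((if c' = i then 1 else 0 : ZMod 3)) = (if c = i then 1 else 0) :=
      fun i => by linear_combination h i
    have h3 := h2 c
    rw [if_pos rfl] at h3
    by_cases hcc : c' = c
    · exact hcc.symm
    · rw [if_neg hcc] at h3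
      exact absurd h3 (by decide)

end BSPaux2

namespace BSPmain
open BSPaux BSPaux2

variable {n d : ℕ}

/-- squared norm -/
def nsq {α : Type*} [Fintype α] (x : α → ℂ) : ℝ := ∑ i, Complex.normSq (x i)

lemma nsq_nonneg {α : Type*} [Fintype α] (x : α → ℂ) : 0 ≤ nsq x :=
  Finset.sum_nonneg fun i _ => Complex.normSq_nonneg _

lemma sum_mul_star {α : Type*} [Fintype α] (x : α → ℂ) :
    ∑ i, x i * star (x i) = (nsq x : ℂ) := by
  rw [nsq, Complex.ofReal_sum]
  exact Finset.sum_congr rfl fun i _ => by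
    rw [Complex.star_def, Complex.mul_conj]

lemma sum_star_mul {α : Type*} [Fintype α] (x : α → ℂ) :
    ∑ i, star (x i) * x i = (nsq x : ℂ) := by
  rw [← sum_mul_star]
  exact Finset.sum_congr rfl fun i _ => mul_comm _ _

lemma nsq_pos {α : Type*} [Fintype α] {x : α → ℂ} (hx : x ≠ 0) : 0 < nsq x := by
  obtain ⟨i, hi⟩ : ∃ i, x i ≠ 0 := by
    by_contra h
    push_neg at h
    exact hx (funext h)
  calc (0:ℝ) < Complex.normSq (x i) := Complex.normSq_pos.2 hi
    _ ≤ nsq x := Finset.single_le_sum (fun j _ => Complex.normSq_nonneg _) (Finset.mem_univ i)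

/-- the vectors |b⟩⟨b| ⊗ |φ_c⟩ -/
def yv (i₀ : Fin n) (ψ : (Fin n → Fin d) → ℂ) (b c : Fin d) : (Fin n → Fin d) → ℂ :=
  fun f => if f i₀ = b then ψ (Function.update f i₀ c) else 0

/-- the phase-averaged biseparable vectors -/
def vv (i₀ : Fin n) (ψ : (Fin n → Fin d) → ℂ) (θ : Fin d → ZMod 3) : (Fin n → Fin d) → ℂ :=
  fun f => χ (θ (f i₀)) * ∑ c, χ (-θ c) * ψ (Function.update f i₀ c)

lemma delta_sum (A : Fin d) (θ : Fin d → ZMod 3) :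
    ∑ i, (if A = i then (1:ZMod 3) else 0) * θ i = θ A := by
  have : ∀ i, (if A = i then (1:ZMod 3) else 0) * θ i = if A = i then θ i else 0 := by
    intro i; split_ifs <;> simp
  rw [Finset.sum_congr rfl fun i _ => this i, Finset.sum_ite_eq]
  simp

/-- The key averaging identity, entrywise. -/
lemma identity_I (i₀ : Fin n) (ψ : (Fin n → Fin d) → ℂ) (f f' : Fin n → Fin d) :
    ∑ θ : Fin d → ZMod 3, vv i₀ ψ θ f * star (vv i₀ ψ θ f')
      = (3:ℂ)^d * (ψ f * star (ψ f')
          + ∑ b, ∑ c, if b = c then 0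
              else yv i₀ ψ b c f * star (yv i₀ ψ b c f')) := by
  set A := f i₀ with hA
  set A' := f' i₀ with hA'
  -- expand the θ-sum termwise
  have expand : ∀ θ : Fin d → ZMod 3,
      vv i₀ ψ θ f * star (vv i₀ ψ θ f')
        = ∑ c, ∑ c', χ (θ A + θ c' - θ c - θ A')
            * (ψ (Function.update f i₀ c) * star (ψ (Function.update f' i₀ c'))) := by
    intro θ
    unfold vv
    rw [star_mul']
    rw [show star (χ (θ (f' i₀))) = χ (-θ A') from χ_star _]
    rw [star_sum]
    have : ∀ c', star (χ (-θ c') * ψ (Function.update f' i₀ c'))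
        = χ (θ c') * star (ψ (Function.update f' i₀ c')) := by
      intro c'
      rw [star_mul', χ_star, neg_neg]
    rw [Finset.sum_congr rfl fun c' _ => this c']
    rw [Finset.mul_sum, Finset.mul_sum, Finset.sum_mul_sum]
    apply Finset.sum_congr rfl
    intro c _
    apply Finset.sum_congr rfl
    intro c' _
    have hχ : χ (θ A + θ c' - θ c - θ A')
        = χ (θ (f i₀)) * (χ (-θ c) * (χ (-θ A') * χ (θ c'))) := by
      rw [← χ_add, ← χ_add, ← χ_add, ← hA]
      congr 1
      ring
    rw [hχ]
    ring
  rw [Finset.sum_congr rfl fun θ _ => expand θ]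
  rw [Finset.sum_comm]
  have swap2 : ∀ c, ∑ θ : Fin d → ZMod 3, ∑ c',
        χ (θ A + θ c' - θ c - θ A')
          * (ψ (Function.update f i₀ c) * star (ψ (Function.update f' i₀ c')))
      = ∑ c', (∑ θ : Fin d → ZMod 3, χ (θ A + θ c' - θ c - θ A'))
          * (ψ (Function.update f i₀ c) * star (ψ (Function.update f' i₀ c'))) := by
    intro c
    rw [Finset.sum_comm]
    exact Finset.sum_congr rfl fun c' _ => by rw [Finset.sum_mul]
  rw [Finset.sum_congr rfl fun c _ => swap2 c]
  -- evaluate the character sum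
  have charval : ∀ c c' : Fin d,
      (∑ θ : Fin d → ZMod 3, χ (θ A + θ c' - θ c - θ A'))
        = if (A = c ∧ A' = c') ∨ (A = A' ∧ c = c') then (3:ℂ)^d else 0 := by
    intro c c'
    set m : Fin d → ZMod 3 := fun i =>
      (if A = i then 1 else 0) + (if c' = i then 1 else 0)
        - (if c = i then 1 else 0) - (if A' = i then 1 else 0) with hm
    have hexp : ∀ θ : Fin d → ZMod 3, θ A + θ c' - θ c - θ A' = ∑ i, m i * θ i := by
      intro θ
      have : ∀ i, m i * θ i
          = (if A = i then 1 else 0) * θ i + (if c' = i then 1 else 0) * θ i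
            - (if c = i then 1 else 0) * θ i - (if A' = i then 1 else 0) * θ i := by
        intro i; rw [hm]; ring
      rw [Finset.sum_congr rfl fun i _ => this i]
      rw [Finset.sum_sub_distrib, Finset.sum_sub_distrib, Finset.sum_add_distrib,
        delta_sum, delta_sum, delta_sum, delta_sum]
    rw [Finset.sum_congr rfl fun θ _ => by rw [hexp θ]]
    rw [char_sum m]
    have hiff : m = 0 ↔ ((A = c ∧ A' = c') ∨ (A = A' ∧ c = c')) := by
      constructor
      · intro h0
        have hptw : ∀ i : Fin d,
            ((if A = i then 1 else 0) + (if c' = i then 1 else 0) : ZMod 3)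
              = (if c = i then 1 else 0) + (if A' = i then 1 else 0) := by
          intro i
          have := congrFun h0 i
          rw [hm] at this
          simp only [Pi.zero_apply] at this
          linear_combination this
        rcases pair_indicator A c A' c' hptw with ⟨h1, h2⟩ | ⟨h1, h2⟩
        · exact Or.inl ⟨h1, h2.symm ▸ rfl⟩
        · exact Or.inr ⟨h1, h2⟩
      · intro h
        funext i
        rw [hm]
        simp only [Pi.zero_apply]
        rcases h with ⟨h1, h2⟩ | ⟨h1, h2⟩ <;> rw [← h1, ← h2] <;> ring
    rw [if_congr hiff rfl rfl]
    congr 1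
    simp [Fintype.card_fin]
  rw [Finset.sum_congr rfl fun c _ => Finset.sum_congr rfl fun c' _ => by
    rw [charval c c']]
  -- now case on whether A = A'
  by_cases hAA : A = A'
  · -- diagonal case
    have hcond : ∀ c c' : Fin d,
        (((A = c ∧ A' = c') ∨ (A = A' ∧ c = c'))) ↔ c = c' := by
      intro c c'
      constructor
      · rintro (⟨h1, h2⟩ | ⟨h1, h2⟩)
        · rw [← h1, hAA, h2]
        · exact h2
      · intro h; exact Or.inr ⟨hAA, h⟩
    have step : ∀ c : Fin d, ∑ c' : Fin d,
          (if (A = c ∧ A' = c') ∨ (A = A' ∧ c = c') then (3:ℂ)^d else 0)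
            * (ψ (Function.update f i₀ c) * star (ψ (Function.update f' i₀ c')))
        = (3:ℂ)^d * (ψ (Function.update f i₀ c) * star (ψ (Function.update f' i₀ c))) := by
      intro c
      have : ∀ c', (if (A = c ∧ A' = c') ∨ (A = A' ∧ c = c') then (3:ℂ)^d else 0)
            * (ψ (Function.update f i₀ c) * star (ψ (Function.update f' i₀ c')))
          = if c = c' then (3:ℂ)^d * (ψ (Function.update f i₀ c)
              * star (ψ (Function.update f' i₀ c'))) else 0 := by
        intro c'
        rw [if_congr (hcond c c') rfl rfl]
        split_ifs <;> simp
      rw [Finset.sum_congr rfl fun c' _ => this c', Finset.sum_ite_eq]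
      simp
    rw [Finset.sum_congr rfl fun c _ => step c]
    rw [← Finset.mul_sum]
    congr 1
    have hin : ∀ b c : Fin d, (if b = c then (0:ℂ)
          else yv i₀ ψ b c f * star (yv i₀ ψ b c f'))
        = if b = A ∧ b ≠ c
            then ψ (Function.update f i₀ c) * star (ψ (Function.update f' i₀ c)) else 0 := by
      intro b c
      unfold yv
      rw [← hA, ← hA', ← hAA]
      by_cases h1 : b = c
      · rw [if_pos h1, if_neg]
        rintro ⟨-, hbc⟩
        exact hbc h1
      · rw [if_neg h1]
        by_cases h2 : A = b
        · rw [if_pos h2, if_pos h2, if_pos ⟨h2.symm, h1⟩]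
        · rw [if_neg h2, if_neg h2, if_neg]
          · simp
          · rintro ⟨hbA, -⟩
            exact h2 hbA.symm
    rw [Finset.sum_congr rfl fun b _ => Finset.sum_congr rfl fun c _ => hin b c]
    rw [Finset.sum_comm]
    have hb_sum : ∀ c : Fin d, (∑ b : Fin d, if b = A ∧ b ≠ c
          then ψ (Function.update f i₀ c) * star (ψ (Function.update f' i₀ c)) else 0)
        = if A = c then 0
            else ψ (Function.update f i₀ c) * star (ψ (Function.update f' i₀ c)) := by
      intro c
      by_cases hc : A = c
      · rw [if_pos hc]
        apply Finset.sum_eq_zero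
        intro b _
        rw [if_neg]
        rintro ⟨rfl, hbc⟩
        exact hbc hc
      · rw [if_neg hc]
        have : ∀ b : Fin d, (if b = A ∧ b ≠ c
              then ψ (Function.update f i₀ c) * star (ψ (Function.update f' i₀ c)) else 0)
            = if b = A
              then ψ (Function.update f i₀ c) * star (ψ (Function.update f' i₀ c)) else 0 := by
          intro b
          apply if_congr _ rfl rfl
          constructor
          · exact fun h => h.1
          · intro h; exact ⟨h, fun hbc => hc (by rw [← h]; exact hbc)⟩
        rw [Finset.sum_congr rfl fun b _ => this b, Finset.sum_ite_eq']
        simp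
    rw [Finset.sum_congr rfl fun c _ => hb_sum c]
    have hupdf : Function.update f i₀ A = f := by rw [hA, Function.update_eq_self]
    have hupdf' : Function.update f' i₀ A = f' := by rw [hAA, hA', Function.update_eq_self]
    have split : ∀ c : Fin d, ψ (Function.update f i₀ c) * star (ψ (Function.update f' i₀ c))
        = (if A = c then ψ (Function.update f i₀ c) * star (ψ (Function.update f' i₀ c)) else 0)
          + (if A = c then 0
              else ψ (Function.update f i₀ c) * star (ψ (Function.update f' i₀ c))) := by
      intro c; split_ifs <;> ring
    rw [Finset.sum_congr rfl fun c _ => split c, Finset.sum_add_distrib, Finset.sum_ite_eq]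
    simp [hupdf, hupdf']
  · -- off-diagonal case
    have hcond : ∀ c c' : Fin d,
        ((A = c ∧ A' = c') ∨ (A = A' ∧ c = c')) ↔ (A = c ∧ A' = c') := by
      intro c c'
      constructor
      · rintro (h | ⟨h1, _⟩)
        · exact h
        · exact absurd h1 hAA
      · exact Or.inl
    have hLHS : ∀ c c' : Fin d,
        (if (A = c ∧ A' = c') ∨ (A = A' ∧ c = c') then (3:ℂ)^d else 0)
            * (ψ (Function.update f i₀ c) * star (ψ (Function.update f' i₀ c')))
        = if A = c then (if A' = c' then (3:ℂ)^d
            * (ψ (Function.update f i₀ c) * star (ψ (Function.update f' i₀ c'))) else 0)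
          else 0 := by
      intro c c'
      rw [if_congr (hcond c c') rfl rfl, ite_and]
      split_ifs <;> ring
    rw [Finset.sum_congr rfl fun c _ => Finset.sum_congr rfl fun c' _ => hLHS c c']
    have inner : ∀ c : Fin d, (∑ c' : Fin d, if A = c then (if A' = c' then (3:ℂ)^d
          * (ψ (Function.update f i₀ c) * star (ψ (Function.update f' i₀ c'))) else 0) else 0)
        = if A = c then (3:ℂ)^d * (ψ (Function.update f i₀ c)
            * star (ψ (Function.update f' i₀ A'))) else 0 := by
      intro c
      by_cases hc : A = c
      · simp only [if_pos hc]
        rw [Finset.sum_ite_eq]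
        simp
      · simp [hc]
    rw [Finset.sum_congr rfl fun c _ => inner c, Finset.sum_ite_eq]
    have hzero : ∀ b c : Fin d, (if b = c then (0:ℂ)
          else yv i₀ ψ b c f * star (yv i₀ ψ b c f')) = 0 := by
      intro b c
      unfold yv
      rw [← hA, ← hA']
      by_cases h1 : b = c
      · rw [if_pos h1]
      · rw [if_neg h1]
        by_cases h2 : A = b <;> by_cases h3 : A' = b
        · exact absurd (h2.trans h3.symm) hAA
        · simp [h2, h3]
        · simp [h2, h3]
        · simp [h2, h3]
    rw [Finset.sum_congr rfl fun b _ => Finset.sum_congr rfl fun c _ => hzero b c]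
    have hupdf : Function.update f i₀ A = f := by rw [hA, Function.update_eq_self]
    have hupdf' : Function.update f' i₀ A' = f' := by rw [hA', Function.update_eq_self]
    simp [hupdf, hupdf']

/-- swap-update involution -/
def swapUpd (i₀ : Fin n) (b c : Fin d) : (Fin n → Fin d) ≃ (Fin n → Fin d) where
  toFun f := Function.update f i₀ (Equiv.swap b c (f i₀))
  invFun f := Function.update f i₀ (Equiv.swap b c (f i₀))
  left_inv f := by
    funext j
    by_cases hj : j = i₀
    · subst hj
      simp
    · simp [Function.update_of_ne hj]
  right_inv f := by
    funext j
    by_cases hj : j = i₀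
    · subst hj
      simp
    · simp [Function.update_of_ne hj]

lemma slice_reindex {M : Type*} [AddCommMonoid M] (i₀ : Fin n) (b c : Fin d)
    (F : (Fin n → Fin d) → M) :
    ∑ f, (if f i₀ = b then F (Function.update f i₀ c) else 0)
      = ∑ f, (if f i₀ = c then F f else 0) := by
  apply Fintype.sum_equiv (swapUpd i₀ b c)
  intro f
  have h1 : (swapUpd i₀ b c f) i₀ = Equiv.swap b c (f i₀) := Function.update_self _ _ _
  by_cases hf : f i₀ = b
  · have h2 : Function.update f i₀ c = swapUpd i₀ b c f := by
      show Function.update f i₀ c = Function.update f i₀ (Equiv.swap b c (f i₀))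
      rw [hf, Equiv.swap_apply_left]
    rw [if_pos hf, if_pos (by rw [h1, hf, Equiv.swap_apply_left]), h2]
  · rw [if_neg hf, if_neg]
    rw [h1]
    intro hc
    apply hf
    have h2 := congrArg (Equiv.swap b c) hc
    rw [Equiv.swap_apply_self, Equiv.swap_apply_right] at h2
    exact h2

lemma nsq_yv (i₀ : Fin n) (ψ : (Fin n → Fin d) → ℂ) (b c : Fin d) :
    nsq (yv i₀ ψ b c) = ∑ f, (if f i₀ = c then Complex.normSq (ψ f) else 0) := by
  unfold nsq yv
  have h : ∀ f : Fin n → Fin d,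
      Complex.normSq (if f i₀ = b then ψ (Function.update f i₀ c) else 0)
        = if f i₀ = b then Complex.normSq (ψ (Function.update f i₀ c)) else 0 := by
    intro f; split_ifs <;> simp
  rw [Finset.sum_congr rfl fun f _ => h f]
  exact slice_reindex i₀ b c (fun f => Complex.normSq (ψ f))

lemma sum_nsq_yv (i₀ : Fin n) (ψ : (Fin n → Fin d) → ℂ) (hψ1 : nsq ψ = 1) :
    ∑ b, ∑ c, (if b = c then 0 else nsq (yv i₀ ψ b c)) = (d:ℝ) - 1 := by
  have h1 : ∀ b c : Fin d, (if b = c then (0:ℝ) else nsq (yv i₀ ψ b c))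
      = (if b = c then 0 else ∑ f, (if f i₀ = c then Complex.normSq (ψ f) else 0)) := by
    intro b c
    by_cases h : b = c <;> simp [h, nsq_yv]
  rw [Finset.sum_congr rfl fun b _ => Finset.sum_congr rfl fun c _ => h1 b c]
  rw [Finset.sum_comm]
  set Sc : Fin d → ℝ := fun c => ∑ f, (if f i₀ = c then Complex.normSq (ψ f) else 0) with hSc
  have h2 : ∀ c : Fin d, (∑ b : Fin d, if b = c then (0:ℝ) else Sc c)
      = (d:ℝ) * Sc c - Sc c := by
    intro c
    have h3 : ∀ b : Fin d, (if b = c then (0:ℝ) else Sc c)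
        = Sc c - (if b = c then Sc c else 0) := by
      intro b; split_ifs <;> ring
    rw [Finset.sum_congr rfl fun b _ => h3 b, Finset.sum_sub_distrib,
      Finset.sum_const, Finset.sum_ite_eq']
    simp [mul_comm]
  rw [Finset.sum_congr rfl fun c _ => h2 c, Finset.sum_sub_distrib, ← Finset.mul_sum]
  have h4 : ∑ c, Sc c = 1 := by
    rw [hSc, Finset.sum_comm]
    have h5 : ∀ f : Fin n → Fin d,
        (∑ c, if f i₀ = c then Complex.normSq (ψ f) else 0) = Complex.normSq (ψ f) := by
      intro f
      rw [Finset.sum_ite_eq]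
      simp
    rw [Finset.sum_congr rfl fun f _ => h5 f]
    exact hψ1
  rw [h4]
  ring

/-- complex-cast norm sums for the phase vectors -/
lemma sum_nsq_vv (i₀ : Fin n) (ψ : (Fin n → Fin d) → ℂ) (hψ1 : nsq ψ = 1) :
    ∑ θ : Fin d → ZMod 3, nsq (vv i₀ ψ θ) = 3^d * d := by
  have hC : ((∑ θ : Fin d → ZMod 3, nsq (vv i₀ ψ θ) : ℝ) : ℂ) = ((3:ℝ)^d * d : ℝ) := by
    push_cast
    have h1 : ∀ θ : Fin d → ZMod 3, ((nsq (vv i₀ ψ θ) : ℝ) : ℂ)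
        = ∑ f, vv i₀ ψ θ f * star (vv i₀ ψ θ f) := fun θ => (sum_mul_star _).symm
    rw [Finset.sum_congr rfl fun θ _ => h1 θ, Finset.sum_comm]
    rw [Finset.sum_congr rfl fun f _ => identity_I i₀ ψ f f]
    rw [← Finset.mul_sum, Finset.sum_add_distrib, sum_mul_star]
    have h2 : (∑ f, ∑ b, ∑ c, if b = c then (0:ℂ)
          else yv i₀ ψ b c f * star (yv i₀ ψ b c f))
        = ((d:ℝ) - 1 : ℝ) := by
      rw [Finset.sum_comm]
      have h3 : ∀ b : Fin d, (∑ f, ∑ c, if b = c then (0:ℂ)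
            else yv i₀ ψ b c f * star (yv i₀ ψ b c f))
          = ∑ c, if b = c then (0:ℂ) else (nsq (yv i₀ ψ b c) : ℝ) := by
        intro b
        rw [Finset.sum_comm]
        apply Finset.sum_congr rfl
        intro c _
        by_cases h : b = c
        · simp [h]
        · rw [Finset.sum_congr rfl fun f _ => if_neg h, if_neg h, sum_mul_star]
      rw [Finset.sum_congr rfl fun b _ => h3 b]
      have h4 := sum_nsq_yv i₀ ψ hψ1
      have h5 : ((∑ b, ∑ c, if b = c then (0:ℝ) else nsq (yv i₀ ψ b c) : ℝ) : ℂ)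
          = (((d:ℝ) - 1 : ℝ) : ℂ) := by rw [h4]
      rw [← h5]
      push_cast
      apply Finset.sum_congr rfl
      intro b _
      apply Finset.sum_congr rfl
      intro c _
      split_ifs <;> simp
    rw [h2, hψ1]
    push_cast
    ring
  exact_mod_cast hC

/-- split equivalence across a bipartition -/
def splitEquiv (M : Finset (Fin n)) :
    (Fin n → Fin d) ≃ ({j : Fin n // j ∈ M} → Fin d) × ({j : Fin n // j ∉ M} → Fin d) where
  toFun f := (fun j => f j.1, fun j => f j.1)
  invFun p := fun j => if hj : j ∈ M then p.1 ⟨j, hj⟩ else p.2 ⟨j, hj⟩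
  left_inv f := by
    funext j
    by_cases hj : j ∈ M <;> simp [hj]
  right_inv p := by
    refine Prod.ext ?_ ?_
    · funext j
      show (if hj : (j:Fin n) ∈ M then p.1 ⟨j, hj⟩ else p.2 ⟨j, hj⟩) = p.1 j
      rw [dif_pos j.2]
    · funext j
      show (if hj : (j:Fin n) ∈ M then p.1 ⟨j, hj⟩ else p.2 ⟨j, hj⟩) = p.2 j
      rw [dif_neg j.2]

lemma sum_split (M : Finset (Fin n)) (F1 : ({j : Fin n // j ∈ M} → Fin d) → ℝ)
    (F2 : ({j : Fin n // j ∉ M} → Fin d) → ℝ) :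
    ∑ f : Fin n → Fin d, F1 (fun j => f j.1) * F2 (fun j => f j.1)
      = (∑ g, F1 g) * (∑ h, F2 h) := by
  calc ∑ f : Fin n → Fin d, F1 (fun j => f j.1) * F2 (fun j => f j.1)
      = ∑ p : ({j : Fin n // j ∈ M} → Fin d) × ({j : Fin n // j ∉ M} → Fin d),
          F1 p.1 * F2 p.2 := Fintype.sum_equiv (splitEquiv M) _ _ (fun f => rfl)
    _ = ∑ g, ∑ h, F1 g * F2 h := Fintype.sum_prod_type _
    _ = (∑ g, F1 g) * (∑ h, F2 h) := by rw [Finset.sum_mul_sum]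

lemma nsq_eq_one_of_unit {α : Type*} [Fintype α] {x : α → ℂ} (h : UnitVec x) :
    nsq x = 1 := by
  have h2 := sum_star_mul x
  rw [h] at h2
  exact_mod_cast h2.symm

lemma star_dotc {α : Type*} [Fintype α] (v w : α → ℂ) :
    star (dotc v w) = ∑ l, star (w l) * v l := by
  unfold dotc
  rw [star_sum]
  apply Finset.sum_congr rfl
  intro l _
  rw [star_mul', star_star]
  ring


lemma sum_exists_const {M : Type*} [AddCommMonoid M] (hn : 0 < n) (hd0 : 0 < d)
    (H : (Fin n → Fin d) → M) :
    ∑ f : Fin n → Fin d, (if (∃ c : Fin d, f = fun _ => c) then H f else 0)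
      = ∑ c : Fin d, H (fun _ => c) := by
  have himg : Finset.univ.filter (fun f : Fin n → Fin d => ∃ c : Fin d, f = fun _ => c)
      = Finset.univ.image (fun c : Fin d => (fun _ => c : Fin n → Fin d)) := by
    ext g
    simp only [Finset.mem_filter, Finset.mem_univ, true_and, Finset.mem_image]
    constructor
    · rintro ⟨c, hc⟩; exact ⟨c, hc.symm⟩
    · rintro ⟨c, hc⟩; exact ⟨c, hc.symm⟩
  rw [← Finset.sum_filter, himg, Finset.sum_image]
  intro x _ y _ hxy
  exact congrFun hxy ⟨0, hn⟩

lemma nsq_ghz (hn : 0 < n) (hd0 : 0 < d) : nsq (ghzVecND n d) = 1 := by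
  unfold nsq ghzVecND
  have h : ∀ f : Fin n → Fin d,
      Complex.normSq (if (∃ c : Fin d, f = fun _ => c)
          then (((Real.sqrt d)⁻¹ : ℝ) : ℂ) else 0)
        = if (∃ c : Fin d, f = fun _ => c)
            then Complex.normSq (((Real.sqrt d)⁻¹ : ℝ) : ℂ) else 0 := by
    intro f; split_ifs <;> simp
  rw [Finset.sum_congr rfl fun f _ => h f, sum_exists_const hn hd0, Finset.sum_const,
    Finset.card_univ, Fintype.card_fin, Complex.normSq_ofReal, ← mul_inv,
    Real.mul_self_sqrt (Nat.cast_nonneg d)]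
  rw [nsmul_eq_mul]
  field_simp

lemma dotc_ghz (hn : 0 < n) (hd0 : 0 < d) (u : (Fin n → Fin d) → ℂ) :
    dotc (ghzVecND n d) u = (((Real.sqrt d)⁻¹ : ℝ) : ℂ) * ∑ c : Fin d, u (fun _ => c) := by
  unfold dotc ghzVecND
  have h : ∀ f : Fin n → Fin d,
      star (if (∃ c : Fin d, f = fun _ => c) then (((Real.sqrt d)⁻¹ : ℝ) : ℂ) else 0) * u f
        = if (∃ c : Fin d, f = fun _ => c)
            then (((Real.sqrt d)⁻¹ : ℝ) : ℂ) * u f else 0 := by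
    intro f; split_ifs <;> simp [Complex.conj_ofReal]
  rw [Finset.sum_congr rfl fun f _ => h f, sum_exists_const hn hd0, Finset.mul_sum]

lemma overlap_sq_le (hn : 0 < n) (hd0 : 0 < d) (u : (Fin n → Fin d) → ℂ)
    (huu : UnitVec u) (hub : IsBisepVec u) :
    Complex.normSq (dotc (ghzVecND n d) u) ≤ (d:ℝ)⁻¹ := by
  obtain ⟨M, hMne, hMuniv, a, b, hab⟩ := hub
  rw [dotc_ghz hn hd0, _root_.map_mul]
  have hr : Complex.normSq (((Real.sqrt d)⁻¹ : ℝ) : ℂ) = (d:ℝ)⁻¹ := by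
    rw [Complex.normSq_ofReal, ← mul_inv, Real.mul_self_sqrt (Nat.cast_nonneg d)]
  rw [hr]
  have hsum : ∀ c : Fin d, u (fun _ => c) = a (fun _ => c) * b (fun _ => c) := fun c => hab _
  rw [Finset.sum_congr rfl fun c _ => hsum c]
  set Na := ∑ g : {j : Fin n // j ∈ M} → Fin d, Complex.normSq (a g) with hNa
  set Nb := ∑ h : {j : Fin n // j ∉ M} → Fin d, Complex.normSq (b h) with hNb
  -- the total norm factorises
  have hNab : Na * Nb = 1 := by
    rw [hNa, hNb, ← sum_split M (fun g => Complex.normSq (a g)) (fun h => Complex.normSq (b h))]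
    have h2 : ∀ f : Fin n → Fin d, Complex.normSq (a fun j => f j.1)
        * Complex.normSq (b fun j => f j.1) = Complex.normSq (u f) := by
      intro f
      rw [hab f, _root_.map_mul]
    rw [Finset.sum_congr rfl fun f _ => h2 f]
    exact nsq_eq_one_of_unit huu
  -- Cauchy–Schwarz chain
  have key : Complex.normSq (∑ c : Fin d, a (fun _ => c) * b (fun _ => c)) ≤ Na * Nb := by
    have h1 : ‖∑ c : Fin d, a (fun _ => c) * b (fun _ => c)‖
        ≤ ∑ c : Fin d, ‖a (fun _ => c)‖ * ‖b (fun _ => c)‖ := by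
      refine (norm_sum_le _ _).trans_eq ?_
      apply Finset.sum_congr rfl
      intro c _
      exact norm_mul _ _
    have h2 : (∑ c : Fin d, ‖a (fun _ => c)‖ * ‖b (fun _ => c)‖)^2
        ≤ (∑ c : Fin d, ‖a (fun _ => c)‖^2)
          * (∑ c : Fin d, ‖b (fun _ => c)‖^2) :=
      Finset.sum_mul_sq_le_sq_mul_sq _ _ _
    have h3 : (∑ c : Fin d, ‖a (fun _ => c)‖^2) ≤ Na := by
      obtain ⟨j₀, hj₀⟩ := hMne
      have hinj : ∀ x ∈ Finset.univ, ∀ y ∈ Finset.univ,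
          ((fun c : Fin d => (fun _ => c : {j : Fin n // j ∈ M} → Fin d)) x
            = (fun c : Fin d => (fun _ => c : {j : Fin n // j ∈ M} → Fin d)) y) → x = y := by
        intro x _ y _ hxy
        exact congrFun hxy ⟨j₀, hj₀⟩
      calc (∑ c : Fin d, ‖a (fun _ => c)‖^2)
          = ∑ g ∈ Finset.univ.image (fun c : Fin d => (fun _ => c : {j : Fin n // j ∈ M} → Fin d)),
              ‖a g‖^2 :=
            (Finset.sum_image (f := fun g => ‖a g‖^2)
              (g := fun c : Fin d => (fun _ => c : {j : Fin n // j ∈ M} → Fin d)) hinj).symm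
        _ ≤ ∑ g : {j : Fin n // j ∈ M} → Fin d, ‖a g‖^2 :=
            Finset.sum_le_sum_of_subset_of_nonneg (Finset.subset_univ _)
              (fun _ _ _ => sq_nonneg _)
        _ = Na := by
            rw [hNa]
            exact Finset.sum_congr rfl fun g _ => Complex.sq_norm _
      
    have h4 : (∑ c : Fin d, ‖b (fun _ => c)‖^2) ≤ Nb := by
      obtain ⟨j₁, hj₁⟩ : ∃ j : Fin n, j ∉ M := by
        by_contra hcon
        push_neg at hcon
        exact hMuniv (Finset.eq_univ_iff_forall.2 hcon)
      have hinj : ∀ x ∈ Finset.univ, ∀ y ∈ Finset.univ,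
          ((fun c : Fin d => (fun _ => c : {j : Fin n // j ∉ M} → Fin d)) x
            = (fun c : Fin d => (fun _ => c : {j : Fin n // j ∉ M} → Fin d)) y) → x = y := by
        intro x _ y _ hxy
        exact congrFun hxy ⟨j₁, hj₁⟩
      calc (∑ c : Fin d, ‖b (fun _ => c)‖^2)
          = ∑ g ∈ Finset.univ.image (fun c : Fin d => (fun _ => c : {j : Fin n // j ∉ M} → Fin d)),
              ‖b g‖^2 :=
            (Finset.sum_image (f := fun g => ‖b g‖^2)
              (g := fun c : Fin d => (fun _ => c : {j : Fin n // j ∉ M} → Fin d)) hinj).symm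
        _ ≤ ∑ g : {j : Fin n // j ∉ M} → Fin d, ‖b g‖^2 :=
            Finset.sum_le_sum_of_subset_of_nonneg (Finset.subset_univ _)
              (fun _ _ _ => sq_nonneg _)
        _ = Nb := by
            rw [hNb]
            exact Finset.sum_congr rfl fun g _ => Complex.sq_norm _
    calc Complex.normSq (∑ c : Fin d, a (fun _ => c) * b (fun _ => c))
        = ‖∑ c : Fin d, a (fun _ => c) * b (fun _ => c)‖^2 :=
          (Complex.sq_norm _).symm
      _ ≤ (∑ c : Fin d, ‖a (fun _ => c)‖ * ‖b (fun _ => c)‖)^2 := by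
          apply pow_le_pow_left₀ (norm_nonneg _) h1
      _ ≤ (∑ c : Fin d, ‖a (fun _ => c)‖^2)
          * (∑ c : Fin d, ‖b (fun _ => c)‖^2) := h2
      _ ≤ Na * Nb := by
          apply mul_le_mul h3 h4 (Finset.sum_nonneg fun _ _ => sq_nonneg _)
          rw [hNa]
          exact Finset.sum_nonneg fun _ _ => Complex.normSq_nonneg _
  calc (d:ℝ)⁻¹ * Complex.normSq (∑ c : Fin d, a (fun _ => c) * b (fun _ => c))
      ≤ (d:ℝ)⁻¹ * (Na * Nb) := by
        apply mul_le_mul_of_nonneg_left key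
        positivity
    _ = (d:ℝ)⁻¹ := by rw [hNab, mul_one]

lemma recomb (i₀ : Fin n) (f : Fin n → Fin d) (c : Fin d) :
    (fun j => if hj : j ∈ ({i₀} : Finset (Fin n)) then c else f j) = Function.update f i₀ c := by
  funext j
  by_cases hj : j ∈ ({i₀} : Finset (Fin n))
  · rw [dif_pos hj]
    rw [Finset.mem_singleton] at hj
    rw [hj, Function.update_self]
  · rw [dif_neg hj]
    rw [Finset.mem_singleton] at hj
    rw [Function.update_of_ne hj]

lemma singleton_ne_univ (i₀ i₁ : Fin n) (hne : i₀ ≠ i₁) :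
    ({i₀} : Finset (Fin n)) ≠ Finset.univ := by
  intro h
  have h2 : i₁ ∈ ({i₀} : Finset (Fin n)) := h ▸ Finset.mem_univ i₁
  exact hne (Finset.mem_singleton.1 h2).symm

lemma isBisep_yv (i₀ i₁ : Fin n) (hne : i₀ ≠ i₁) (ψ : (Fin n → Fin d) → ℂ) (b c : Fin d) :
    IsBisepVec (yv i₀ ψ b c) := by
  refine ⟨{i₀}, Finset.singleton_nonempty _, singleton_ne_univ i₀ i₁ hne,
    fun g => if g ⟨i₀, Finset.mem_singleton_self i₀⟩ = b then 1 else 0,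
    fun h => ψ (fun j => if hj : j ∈ ({i₀} : Finset (Fin n)) then c else h ⟨j, hj⟩), ?_⟩
  intro f
  show yv i₀ ψ b c f = (if f i₀ = b then 1 else 0)
      * ψ (fun j => if hj : j ∈ ({i₀} : Finset (Fin n)) then c else f j)
  rw [recomb]
  unfold yv
  split_ifs <;> simp

lemma isBisep_vv (i₀ i₁ : Fin n) (hne : i₀ ≠ i₁) (ψ : (Fin n → Fin d) → ℂ)
    (θ : Fin d → ZMod 3) : IsBisepVec (vv i₀ ψ θ) := by
  refine ⟨{i₀}, Finset.singleton_nonempty _, singleton_ne_univ i₀ i₁ hne,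
    fun g => BSPaux.χ (θ (g ⟨i₀, Finset.mem_singleton_self i₀⟩)),
    fun h => ∑ c, BSPaux.χ (-θ c)
      * ψ (fun j => if hj : j ∈ ({i₀} : Finset (Fin n)) then c else h ⟨j, hj⟩), ?_⟩
  intro f
  show vv i₀ ψ θ f = BSPaux.χ (θ (f i₀))
      * ∑ c, BSPaux.χ (-θ c)
          * ψ (fun j => if hj : j ∈ ({i₀} : Finset (Fin n)) then c else f j)
  rw [Finset.sum_congr rfl fun c _ => by rw [recomb i₀ f c]]
  rfl

/-- computational-basis product unit vector used as a normalisation fallback -/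
def ev (c₀ : Fin d) : (Fin n → Fin d) → ℂ := fun f => if f = (fun _ => c₀) then 1 else 0

lemma unit_ev (c₀ : Fin d) : UnitVec (ev (n := n) c₀) := by
  unfold UnitVec ev
  have h : ∀ f : Fin n → Fin d,
      star (if f = (fun _ => c₀) then (1:ℂ) else 0) * (if f = (fun _ => c₀) then 1 else 0)
        = if f = (fun _ => c₀) then 1 else 0 := by
    intro f; split_ifs <;> simp
  rw [Finset.sum_congr rfl fun f _ => h f, Finset.sum_ite_eq']
  simp

lemma isBisep_ev (i₀ i₁ : Fin n) (hne : i₀ ≠ i₁) (c₀ : Fin d) :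
    IsBisepVec (ev (n := n) c₀) := by
  refine ⟨{i₀}, Finset.singleton_nonempty _, singleton_ne_univ i₀ i₁ hne,
    fun g => if g ⟨i₀, Finset.mem_singleton_self i₀⟩ = c₀ then 1 else 0,
    fun h => if (∀ j, h j = c₀) then 1 else 0, ?_⟩
  intro f
  show (if f = (fun _ => c₀) then (1:ℂ) else 0)
      = (if f i₀ = c₀ then 1 else 0)
        * (if (∀ j : {j : Fin n // j ∉ ({i₀} : Finset (Fin n))}, f j.1 = c₀) then 1 else 0)
  by_cases h1 : f i₀ = c₀
  · by_cases h2 : ∀ j : {j : Fin n // j ∉ ({i₀} : Finset (Fin n))}, f j.1 = c₀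
    · rw [if_pos h1, if_pos h2, if_pos]
      · ring
      · funext j
        by_cases hj : j = i₀
        · rw [hj]; exact h1
        · exact h2 ⟨j, by simp [hj]⟩
    · rw [if_pos h1, if_neg h2, if_neg]
      · ring
      · intro hf
        apply h2
        intro j
        rw [hf]
  · rw [if_neg h1, if_neg (fun hf : f = (fun _ => c₀) => h1 (by rw [hf])), zero_mul]

lemma isBisep_scale {v : (Fin n → Fin d) → ℂ} (z : ℂ) (h : IsBisepVec v) :
    IsBisepVec (fun f => z * v f) := by
  obtain ⟨M, h1, h2, a, b, hab⟩ := h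
  refine ⟨M, h1, h2, fun g => z * a g, b, fun f => ?_⟩
  show z * v f = (z * a fun j => f j.1) * b fun j => f j.1
  rw [hab]
  ring

/-- normalisation with fallback -/
def nrm {α : Type*} [Fintype α] (x fb : α → ℂ) : α → ℂ :=
  if x = 0 then fb else fun i => ((Real.sqrt (nsq x))⁻¹ : ℝ) * x i

lemma unit_nrm {α : Type*} [Fintype α] (x fb : α → ℂ) (hfb : UnitVec fb) :
    UnitVec (nrm x fb) := by
  unfold nrm
  split_ifs with h
  · exact hfb
  · unfold UnitVec
    have hpt : ∀ i, star ((((Real.sqrt (nsq x))⁻¹ : ℝ) : ℂ) * x i)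
          * ((((Real.sqrt (nsq x))⁻¹ : ℝ) : ℂ) * x i)
        = (((Real.sqrt (nsq x))⁻¹ : ℝ) : ℂ) * (((Real.sqrt (nsq x))⁻¹ : ℝ) : ℂ)
          * (star (x i) * x i) := by
      intro i
      rw [star_mul', Complex.star_def, Complex.conj_ofReal]
      ring
    rw [Finset.sum_congr rfl fun i _ => hpt i, ← Finset.mul_sum, sum_star_mul]
    have hs := nsq_pos h
    rw [← Complex.ofReal_mul, ← Complex.ofReal_mul, ← mul_inv,
      Real.mul_self_sqrt (le_of_lt hs), inv_mul_cancel₀ (ne_of_gt hs)]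
    norm_num

lemma bisep_nrm {x fb : (Fin n → Fin d) → ℂ} (hx : IsBisepVec x) (hfb : IsBisepVec fb) :
    IsBisepVec (nrm x fb) := by
  unfold nrm
  split_ifs with h
  · exact hfb
  · exact isBisep_scale _ hx

lemma vecProj_zero : vecProj (0 : (Fin n → Fin d) → ℂ) = 0 := by
  ext i j
  simp [vecProj]

lemma weight_identity (t : ℝ) (x fb : (Fin n → Fin d) → ℂ) :
    ((t * nsq x : ℝ) : ℂ) • vecProj (nrm x fb) = (t : ℂ) • vecProj x := by
  by_cases h : x = 0
  · rw [h]
    have : nsq (0 : (Fin n → Fin d) → ℂ) = 0 := by simp [nsq]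
    rw [this, vecProj_zero]
    simp
  · unfold nrm
    rw [if_neg h]
    ext i j
    simp only [Matrix.smul_apply, vecProj, Matrix.of_apply, smul_eq_mul]
    rw [star_mul', Complex.star_def, Complex.conj_ofReal]
    have hs := nsq_pos h
    have hr : ((((Real.sqrt (nsq x))⁻¹ : ℝ) : ℂ)) * ((((Real.sqrt (nsq x))⁻¹ : ℝ) : ℂ))
        * ((nsq x : ℝ) : ℂ) = 1 := by
      rw [← Complex.ofReal_mul, ← Complex.ofReal_mul, ← mul_inv,
        Real.mul_self_sqrt (le_of_lt hs), inv_mul_cancel₀ (ne_of_gt hs)]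
      norm_num
    push_cast at hr ⊢
    linear_combination (t : ℂ) * x i * (starRingEnd ℂ) (x j) * hr

/-- projector complement -/
def Qm (G : (Fin n → Fin d) → ℂ) : Matrix (Fin n → Fin d) (Fin n → Fin d) ℂ :=
  1 - outer G G

/-- columns of `Qm` -/
def qcol (G : (Fin n → Fin d) → ℂ) (j : Fin n → Fin d) : (Fin n → Fin d) → ℂ :=
  fun i => Qm G i j

lemma dotc_self (x : (Fin n → Fin d) → ℂ) : dotc x x = (nsq x : ℝ) := sum_star_mul x

lemma P_mul_P (G : (Fin n → Fin d) → ℂ) (hG1 : nsq G = 1) :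
    outer G G * outer G G = outer G G := by
  rw [outer_mul_outer, dotc_self, hG1]
  norm_num

lemma Qm_herm (G : (Fin n → Fin d) → ℂ) : (Qm G)ᴴ = Qm G := by
  unfold Qm
  rw [conjTranspose_sub, conjTranspose_one, outer_conjTranspose]

lemma Qm_apply_star (G : (Fin n → Fin d) → ℂ) (i j : Fin n → Fin d) :
    star (Qm G i j) = Qm G j i := by
  have h := congrFun (congrFun (Qm_herm G) j) i
  rw [Matrix.conjTranspose_apply] at h
  exact h

lemma Qm_mul_Qm (G : (Fin n → Fin d) → ℂ) (hG1 : nsq G = 1) : Qm G * Qm G = Qm G := by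
  unfold Qm
  rw [sub_mul, one_mul, mul_sub, mul_one, P_mul_P G hG1, sub_self, sub_zero]

lemma Qm_mul_P (G : (Fin n → Fin d) → ℂ) (hG1 : nsq G = 1) : Qm G * outer G G = 0 := by
  unfold Qm
  rw [sub_mul, one_mul, P_mul_P G hG1, sub_self]

lemma sum_qcol_quad (G : (Fin n → Fin d) → ℂ)
    (ρ : Matrix (Fin n → Fin d) (Fin n → Fin d) ℂ) :
    ∑ j, (∑ k, ∑ l, star (qcol G j k) * ρ k l * qcol G j l) = (Qm G * ρ * Qm G).trace := by
  have hrhs : (Qm G * ρ * Qm G).trace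
      = ∑ j, ∑ l, (∑ k, Qm G j k * ρ k l) * Qm G l j := by
    rw [Matrix.trace]
    apply Finset.sum_congr rfl
    intro j _
    rw [Matrix.diag_apply, Matrix.mul_apply]
    apply Finset.sum_congr rfl
    intro l _
    rw [Matrix.mul_apply]
  rw [hrhs]
  apply Finset.sum_congr rfl
  intro j _
  rw [Finset.sum_comm]
  apply Finset.sum_congr rfl
  intro l _
  rw [Finset.sum_mul]
  apply Finset.sum_congr rfl
  intro k _
  rw [show star (qcol G j k) = Qm G j k from Qm_apply_star G k j]
  rfl

/-- the overlap functional -/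
def sG (G : (Fin n → Fin d) → ℂ) (ρ : Matrix (Fin n → Fin d) (Fin n → Fin d) ℂ) : ℂ :=
  ∑ k, ∑ l, star (G k) * ρ k l * G l

lemma sG_vecProj (G u : (Fin n → Fin d) → ℂ) :
    sG G (vecProj u) = ((Complex.normSq (dotc G u) : ℝ) : ℂ) := by
  unfold sG
  have h1 : ∑ k, ∑ l, star (G k) * (vecProj u) k l * G l
      = (∑ k, star (G k) * u k) * (∑ l, star (u l) * G l) := by
    rw [Finset.sum_mul_sum]
    apply Finset.sum_congr rfl
    intro k _
    apply Finset.sum_congr rfl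
    intro l _
    show star (G k) * (u k * star (u l)) * G l = _
    ring
  rw [h1, ← star_dotc G u]
  show dotc G u * star (dotc G u) = _
  rw [Complex.star_def, Complex.mul_conj]

lemma trace_vecProj (u : (Fin n → Fin d) → ℂ) :
    (vecProj u).trace = ((nsq u : ℝ) : ℂ) := by
  rw [Matrix.trace, ← sum_mul_star u]
  apply Finset.sum_congr rfl
  intro i _
  rfl

lemma sG_sum {m : ℕ} (G : (Fin n → Fin d) → ℂ) (w : Fin m → ℝ)
    (u : Fin m → (Fin n → Fin d) → ℂ) :
    sG G (∑ j, (w j : ℂ) • vecProj (u j))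
      = ∑ j, (w j : ℂ) * ((Complex.normSq (dotc G (u j)) : ℝ) : ℂ) := by
  unfold sG
  have h1 : ∀ k l : Fin n → Fin d, star (G k) * (∑ j, (w j : ℂ) • vecProj (u j)) k l * G l
      = ∑ j, star (G k) * ((w j : ℂ) * (u j k * star (u j l))) * G l := by
    intro k l
    rw [Matrix.sum_apply, Finset.mul_sum, Finset.sum_mul]
    apply Finset.sum_congr rfl
    intro x _
    rfl
  rw [Finset.sum_congr rfl fun k _ => Finset.sum_congr rfl fun l _ => h1 k l]
  rw [Finset.sum_congr rfl fun k (_ : k ∈ Finset.univ) => Finset.sum_comm]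
  rw [Finset.sum_comm]
  apply Finset.sum_congr rfl
  intro j _
  have h2 : ∑ k, ∑ l, star (G k) * ((w j : ℂ) * (u j k * star (u j l))) * G l
      = (w j : ℂ) * sG G (vecProj (u j)) := by
    unfold sG
    rw [Finset.mul_sum]
    apply Finset.sum_congr rfl
    intro k _
    rw [Finset.mul_sum]
    apply Finset.sum_congr rfl
    intro l _
    show star (G k) * ((w j : ℂ) * (u j k * star (u j l))) * G l
        = (w j : ℂ) * (star (G k) * (u j k * star (u j l)) * G l)
    ring
  rw [h2, sG_vecProj]

/-- Kraus operators of the BSP channel -/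
def kraus (i₀ : Fin n) (ψ G : (Fin n → Fin d) → ℂ) :
    Unit ⊕ ((Fin n → Fin d) × Fin d × Fin d)
      → Matrix (Fin n → Fin d) (Fin n → Fin d) ℂ
  | Sum.inl _ => outer ψ G
  | Sum.inr (j, b, c) => if b = c then 0 else
      (((Real.sqrt (((d:ℝ) - 1)⁻¹)) : ℝ) : ℂ) • outer (yv i₀ ψ b c) (qcol G j)

/-- the channel -/
def chan (i₀ : Fin n) (ψ G : (Fin n → Fin d) → ℂ)
    (ρ : Matrix (Fin n → Fin d) (Fin n → Fin d) ℂ) :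
    Matrix (Fin n → Fin d) (Fin n → Fin d) ℂ :=
  ∑ x, kraus i₀ ψ G x * ρ * (kraus i₀ ψ G x)ᴴ

lemma sqrt_const_sq (hd : 2 ≤ d) :
    ((((Real.sqrt (((d:ℝ) - 1)⁻¹)) : ℝ) : ℂ)) * ((((Real.sqrt (((d:ℝ) - 1)⁻¹)) : ℝ) : ℂ))
      = ((((d:ℝ) - 1)⁻¹ : ℝ) : ℂ) := by
  rw [← Complex.ofReal_mul, Real.mul_self_sqrt]
  have h1 : (2:ℝ) ≤ (d:ℝ) := by exact_mod_cast hd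
  have h2 : (0:ℝ) ≤ (d:ℝ) - 1 := by linarith
  exact inv_nonneg.2 h2

lemma star_sqrt_const :
    star ((((Real.sqrt (((d:ℝ) - 1)⁻¹)) : ℝ) : ℂ)) = ((((Real.sqrt (((d:ℝ) - 1)⁻¹))) : ℝ) : ℂ) := by
  rw [Complex.star_def, Complex.conj_ofReal]

lemma chan_apply (i₀ : Fin n) (ψ G : (Fin n → Fin d) → ℂ) (hd : 2 ≤ d)
    (ρ : Matrix (Fin n → Fin d) (Fin n → Fin d) ℂ) :
    chan i₀ ψ G ρ = sG G ρ • outer ψ ψ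
      + (((((d:ℝ) - 1)⁻¹ : ℝ) : ℂ) * (Qm G * ρ * Qm G).trace)
          • (∑ b, ∑ c, if b = c then 0
              else outer (yv i₀ ψ b c) (yv i₀ ψ b c)) := by
  unfold chan
  rw [Fintype.sum_sum_type]
  congr 1
  · rw [Fintype.sum_unique]
    show outer ψ G * ρ * (outer ψ G)ᴴ = _
    rw [outer_mul_mul]
    rfl
  · rw [Fintype.sum_prod_type]
    have hterm : ∀ (j : Fin n → Fin d) (b c : Fin d),
        kraus i₀ ψ G (Sum.inr (j, b, c)) * ρ * (kraus i₀ ψ G (Sum.inr (j, b, c)))ᴴ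
          = if b = c then 0
            else (((((d:ℝ) - 1)⁻¹ : ℝ) : ℂ)
                * (∑ k, ∑ l, star (qcol G j k) * ρ k l * qcol G j l))
              • outer (yv i₀ ψ b c) (yv i₀ ψ b c) := by
      intro j b c
      by_cases hbc : b = c
      · simp [kraus, hbc]
      · show (if b = c then 0 else _) * ρ * (if b = c then 0 else _)ᴴ = _
        rw [if_neg hbc, if_neg hbc]
        rw [Matrix.conjTranspose_smul, star_sqrt_const]
        rw [Matrix.smul_mul, Matrix.smul_mul, Matrix.mul_smul, smul_smul, sqrt_const_sq hd]
        rw [outer_mul_mul, smul_smul]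
    rw [Finset.sum_congr rfl fun j _ => Fintype.sum_prod_type _]
    rw [Finset.sum_congr rfl fun j (_ : j ∈ Finset.univ) =>
      Finset.sum_congr rfl fun b _ => Finset.sum_congr rfl fun c _ => hterm j b c]
    rw [Finset.sum_comm]
    rw [Finset.sum_congr rfl fun b (_ : b ∈ Finset.univ) => Finset.sum_comm]
    rw [Finset.smul_sum]
    apply Finset.sum_congr rfl
    intro b _
    rw [Finset.smul_sum]
    apply Finset.sum_congr rfl
    intro c _
    by_cases hbc : b = c
    · simp [hbc]
    · rw [Finset.sum_congr rfl fun j _ => if_neg hbc, if_neg hbc]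
      rw [← Finset.sum_smul, ← Finset.mul_sum, sum_qcol_quad]

lemma kraus_sum_eq_one (i₀ : Fin n) (ψ G : (Fin n → Fin d) → ℂ) (hd : 2 ≤ d)
    (hψ1 : nsq ψ = 1) (hG1 : nsq G = 1) :
    ∑ x, (kraus i₀ ψ G x)ᴴ * kraus i₀ ψ G x = 1 := by
  rw [Fintype.sum_sum_type]
  have hP : ∑ _x : Unit, (kraus i₀ ψ G (Sum.inl _x))ᴴ * kraus i₀ ψ G (Sum.inl _x)
      = outer G G := by
    rw [Fintype.sum_unique]
    show (outer ψ G)ᴴ * outer ψ G = _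
    rw [outer_conjTranspose, outer_mul_outer, dotc_self, hψ1]
    norm_num
  have houtq : ∑ j, outer (qcol G j) (qcol G j) = Qm G := by
    ext i i'
    rw [Matrix.sum_apply]
    have h1 : ∀ j, outer (qcol G j) (qcol G j) i i' = Qm G i j * Qm G j i' := by
      intro j
      rw [outer_apply, show star (qcol G j i') = Qm G j i' from Qm_apply_star G i' j]
      rfl
    rw [Finset.sum_congr rfl fun j _ => h1 j, ← Matrix.mul_apply, Qm_mul_Qm G hG1]
  have hterm : ∀ (j : Fin n → Fin d) (b c : Fin d),
      (kraus i₀ ψ G (Sum.inr (j, b, c)))ᴴ * kraus i₀ ψ G (Sum.inr (j, b, c))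
        = if b = c then 0
          else (((((d:ℝ) - 1)⁻¹ : ℝ) : ℂ) * ((nsq (yv i₀ ψ b c) : ℝ) : ℂ))
            • outer (qcol G j) (qcol G j) := by
    intro j b c
    by_cases hbc : b = c
    · simp [kraus, hbc]
    · show ((if b = c then 0 else _) : Matrix _ _ ℂ)ᴴ * (if b = c then 0 else _) = _
      rw [if_neg hbc, if_neg hbc]
      rw [Matrix.conjTranspose_smul, star_sqrt_const]
      rw [Matrix.smul_mul, Matrix.mul_smul, smul_smul, sqrt_const_sq hd]
      rw [outer_conjTranspose, outer_mul_outer, dotc_self, smul_smul]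
  rw [Fintype.sum_prod_type]
  rw [Finset.sum_congr rfl fun j (_ : j ∈ Finset.univ) => Fintype.sum_prod_type _]
  rw [Finset.sum_congr rfl fun j (_ : j ∈ Finset.univ) =>
    Finset.sum_congr rfl fun b _ => Finset.sum_congr rfl fun c _ => hterm j b c]
  rw [Finset.sum_comm]
  rw [Finset.sum_congr rfl fun b (_ : b ∈ Finset.univ) => Finset.sum_comm]
  have hbc_sum : ∀ b c : Fin d,
      (∑ j, if b = c then (0 : Matrix (Fin n → Fin d) (Fin n → Fin d) ℂ)
          else (((((d:ℝ) - 1)⁻¹ : ℝ) : ℂ) * ((nsq (yv i₀ ψ b c) : ℝ) : ℂ))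
            • outer (qcol G j) (qcol G j))
        = (if b = c then (0:ℂ)
            else ((((d:ℝ) - 1)⁻¹ : ℝ) : ℂ) * ((nsq (yv i₀ ψ b c) : ℝ) : ℂ)) • Qm G := by
    intro b c
    by_cases hbc : b = c
    · simp [hbc]
    · rw [Finset.sum_congr rfl fun j _ => if_neg hbc, if_neg hbc, ← Finset.smul_sum, houtq]
  have hscal : ∑ b, ∑ c, (if b = c then (0:ℂ)
      else ((((d:ℝ) - 1)⁻¹ : ℝ) : ℂ) * ((nsq (yv i₀ ψ b c) : ℝ) : ℂ)) = 1 := by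
    have h1 : ∀ b c : Fin d, (if b = c then (0:ℂ)
        else ((((d:ℝ) - 1)⁻¹ : ℝ) : ℂ) * ((nsq (yv i₀ ψ b c) : ℝ) : ℂ))
          = ((((d:ℝ) - 1)⁻¹ : ℝ) : ℂ)
            * (((if b = c then 0 else nsq (yv i₀ ψ b c) : ℝ)) : ℂ) := by
      intro b c
      split_ifs <;> simp
    rw [Finset.sum_congr rfl fun b _ => Finset.sum_congr rfl fun c _ => h1 b c]
    rw [Finset.sum_congr rfl fun b (_ : b ∈ Finset.univ) => (Finset.mul_sum _ _ _).symm]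
    rw [← Finset.mul_sum]
    have h2 : ∑ b, ∑ c, ((((if b = c then 0 else nsq (yv i₀ ψ b c) : ℝ)) : ℂ))
        = (((d:ℝ) - 1 : ℝ) : ℂ) := by
      rw [← sum_nsq_yv i₀ ψ hψ1, Complex.ofReal_sum]
      apply Finset.sum_congr rfl
      intro b _
      rw [Complex.ofReal_sum]
    rw [h2, ← Complex.ofReal_mul]
    have h3 : (2:ℝ) ≤ (d:ℝ) := by exact_mod_cast hd
    have h4 : (d:ℝ) - 1 ≠ 0 := by intro h; linarith [h]
    rw [inv_mul_cancel₀ h4]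
    norm_num
  rw [Finset.sum_congr rfl fun b (_ : b ∈ Finset.univ) =>
    Finset.sum_congr rfl fun c _ => hbc_sum b c]
  rw [Finset.sum_congr rfl fun b (_ : b ∈ Finset.univ) => (Finset.sum_smul).symm]
  rw [← Finset.sum_smul, hscal, one_smul, hP]
  unfold Qm
  abel

lemma chan_ghz (i₀ : Fin n) (ψ G : (Fin n → Fin d) → ℂ) (hd : 2 ≤ d)
    (hG1 : nsq G = 1) :
    chan i₀ ψ G (outer G G) = outer ψ ψ := by
  rw [chan_apply i₀ ψ G hd]
  have h1 : sG G (outer G G) = 1 := by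
    rw [show outer G G = vecProj G from rfl, sG_vecProj, dotc_self, hG1]
    norm_num [Complex.normSq_ofReal]
  have h2 : Qm G * outer G G * Qm G = 0 := by
    rw [Qm_mul_P G hG1, Matrix.zero_mul]
  rw [h1, h2, Matrix.trace_zero, mul_zero, zero_smul, add_zero, one_smul]

lemma outer_eq_vecProj (v : (Fin n → Fin d) → ℂ) : outer v v = vecProj v := rfl

lemma identity_I_mat (i₀ : Fin n) (ψ : (Fin n → Fin d) → ℂ) :
    ∑ θ : Fin d → ZMod 3, vecProj (vv i₀ ψ θ)
      = ((3:ℂ)^d) • (vecProj ψ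
          + ∑ b, ∑ c, if b = c then 0 else vecProj (yv i₀ ψ b c)) := by
  ext f f'
  rw [Matrix.sum_apply, Matrix.smul_apply, Matrix.add_apply, Matrix.sum_apply]
  have h1 : ∀ b : Fin d, (∑ c, if b = c then (0 : Matrix (Fin n → Fin d) (Fin n → Fin d) ℂ)
        else vecProj (yv i₀ ψ b c)) f f'
      = ∑ c, (if b = c then 0 else yv i₀ ψ b c f * star (yv i₀ ψ b c f')) := by
    intro b
    rw [Matrix.sum_apply]
    apply Finset.sum_congr rfl
    intro c _
    by_cases h : b = c <;> simp [h, vecProj]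
  rw [Finset.sum_congr rfl fun b _ => h1 b]
  show ∑ θ : Fin d → ZMod 3, vv i₀ ψ θ f * star (vv i₀ ψ θ f')
      = (3:ℂ)^d • (ψ f * star (ψ f')
          + ∑ b, ∑ c, if b = c then 0 else yv i₀ ψ b c f * star (yv i₀ ψ b c f'))
  rw [identity_I i₀ ψ f f', smul_eq_mul]

lemma trace_P_mul (G : (Fin n → Fin d) → ℂ)
    (ρ : Matrix (Fin n → Fin d) (Fin n → Fin d) ℂ) :
    (outer G G * ρ).trace = sG G ρ := by
  rw [Matrix.trace]
  unfold sG
  have h1 : ∀ i, (outer G G * ρ).diag i = ∑ k, G i * star (G k) * ρ k i := by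
    intro i
    rw [Matrix.diag_apply, Matrix.mul_apply]
    apply Finset.sum_congr rfl
    intro k _
    rfl
  rw [Finset.sum_congr rfl fun i _ => h1 i, Finset.sum_comm]
  apply Finset.sum_congr rfl
  intro k _
  apply Finset.sum_congr rfl
  intro l _
  ring

lemma trace_QQ (G : (Fin n → Fin d) → ℂ) (hG1 : nsq G = 1)
    (ρ : Matrix (Fin n → Fin d) (Fin n → Fin d) ℂ) :
    (Qm G * ρ * Qm G).trace = ρ.trace - sG G ρ := by
  rw [Matrix.trace_mul_comm, ← Matrix.mul_assoc, Qm_mul_Qm G hG1]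
  have h1 : Qm G * ρ = ρ - outer G G * ρ := by
    unfold Qm
    rw [sub_mul, one_mul]
  rw [h1, Matrix.trace_sub, trace_P_mul]

end BSPmain

open BSPaux BSPaux2 BSPmain

set_option maxHeartbeats 2000000

/-- **A unique maximally GME state under biseparability-preserving maps.** The
generalised GHZ state can be transformed into any pure state of `(ℂ^d)^{⊗n}` by a CPTP
biseparability-preserving map. -/
theorem maximally_GME_state_BSP (n d : ℕ) (hn : 2 ≤ n) (hd : 2 ≤ d)
    (ψ : (Fin n → Fin d) → ℂ) (hψ : UnitVec ψ) :
    ∃ Λ : Matrix (Fin n → Fin d) (Fin n → Fin d) ℂ →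
          Matrix (Fin n → Fin d) (Fin n → Fin d) ℂ,
      IsCPTP Λ ∧
      (∀ σ, IsState σ → BisepState (fun _ : Fin n => Fin d) σ →
        BisepState (fun _ : Fin n => Fin d) (Λ σ)) ∧
      Λ (vecProj (ghzVecND n d)) = vecProj ψ := by
  have hn0 : 0 < n := by omega
  have hd0 : 0 < d := by omega
  set i₀ : Fin n := ⟨0, hn0⟩ with hi₀
  set i₁ : Fin n := ⟨1, by omega⟩ with hi₁
  have hne : i₀ ≠ i₁ := by
    intro h
    have h2 := congrArg Fin.val h
    rw [hi₀, hi₁] at h2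
    simp at h2
  set G := ghzVecND n d with hG
  have hG1 : nsq G = 1 := nsq_ghz hn0 hd0
  have hψ1 : nsq ψ = 1 := nsq_eq_one_of_unit hψ
  have hdR : (2:ℝ) ≤ (d:ℝ) := by exact_mod_cast hd
  have hd1ne : (d:ℝ) - 1 ≠ 0 := by intro h; linarith
  have h3d : (3:ℝ)^d ≠ 0 := by positivity
  refine ⟨chan i₀ ψ G, ?_, ?_, ?_⟩
  · -- CPTP
    refine ⟨Fintype.card (Unit ⊕ ((Fin n → Fin d) × Fin d × Fin d)),
      fun i => kraus i₀ ψ G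
        ((Fintype.equivFin (Unit ⊕ ((Fin n → Fin d) × Fin d × Fin d))).symm i), ?_, ?_⟩
    · intro ρ
      show chan i₀ ψ G ρ = _
      unfold chan
      symm
      apply Fintype.sum_equiv
        (Fintype.equivFin (Unit ⊕ ((Fin n → Fin d) × Fin d × Fin d))).symm
      intro i
      rfl
    · refine Eq.trans ?_ (kraus_sum_eq_one i₀ ψ G hd hψ1 hG1)
      apply Fintype.sum_equiv
        (Fintype.equivFin (Unit ⊕ ((Fin n → Fin d) × Fin d × Fin d))).symm
      intro i
      rfl
  · -- biseparability preserving
    intro σ hσst hσbs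
    obtain ⟨m, w, u, hw0, hw1, hub, hσeq⟩ := hσbs
    set pr : ℝ := ∑ k, w k * Complex.normSq (dotc G (u k)) with hpr
    have hsG : sG G σ = ((pr : ℝ) : ℂ) := by
      rw [hσeq, sG_sum G w u, hpr, Complex.ofReal_sum]
      apply Finset.sum_congr rfl
      intro k _
      rw [Complex.ofReal_mul]
    have hpr0 : 0 ≤ pr :=
      Finset.sum_nonneg fun k _ => mul_nonneg (hw0 k) (Complex.normSq_nonneg _)
    have hprd : pr * d ≤ 1 := by
      have h5 : pr ≤ (d:ℝ)⁻¹ := by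
        calc pr ≤ ∑ k, w k * (d:ℝ)⁻¹ := Finset.sum_le_sum fun k _ =>
              mul_le_mul_of_nonneg_left
                (overlap_sq_le hn0 hd0 (u k) (hub k).1 (hub k).2) (hw0 k)
          _ = (d:ℝ)⁻¹ := by rw [← Finset.sum_mul, hw1, one_mul]
      calc pr * d ≤ (d:ℝ)⁻¹ * d := mul_le_mul_of_nonneg_right h5 (by positivity)
        _ = 1 := by field_simp
    set c2 : ℝ := (1 - pr * d) / ((d:ℝ) - 1) with hc2
    have hc20 : 0 ≤ c2 := div_nonneg (by linarith) (by linarith)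
    have htrQ : (Qm G * σ * Qm G).trace = 1 - ((pr:ℝ):ℂ) := by
      rw [trace_QQ G hG1, hσst.2, hsG]
    set e0 : (Fin n → Fin d) → ℂ := ev (⟨0, hd0⟩ : Fin d) with he0
    have hueb : UnitVec e0 ∧ IsBisepVec e0 :=
      ⟨unit_ev _, isBisep_ev i₀ i₁ hne _⟩
    set Wf : ((Fin d → ZMod 3) ⊕ (Fin d × Fin d)) → ℝ :=
      Sum.elim (fun θ => (pr / 3^d) * nsq (vv i₀ ψ θ))
        (fun bc => if bc.1 = bc.2 then 0 else c2 * nsq (yv i₀ ψ bc.1 bc.2)) with hWf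
    set Uf : ((Fin d → ZMod 3) ⊕ (Fin d × Fin d)) → (Fin n → Fin d) → ℂ :=
      Sum.elim (fun θ => nrm (vv i₀ ψ θ) e0)
        (fun bc => if bc.1 = bc.2 then e0 else nrm (yv i₀ ψ bc.1 bc.2) e0) with hUf
    set E := (Fintype.equivFin ((Fin d → ZMod 3) ⊕ (Fin d × Fin d))).symm with hE
    refine ⟨_, fun k => Wf (E k), fun k => Uf (E k), ?_, ?_, ?_, ?_⟩
    · intro k
      show 0 ≤ Wf (E k)
      obtain θ | bc := E k
      · show 0 ≤ (pr / 3^d) * nsq (vv i₀ ψ θ)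
        exact mul_nonneg (div_nonneg hpr0 (by positivity)) (nsq_nonneg _)
      · show 0 ≤ if bc.1 = bc.2 then (0:ℝ) else c2 * nsq (yv i₀ ψ bc.1 bc.2)
        split_ifs
        · exact le_refl 0
        · exact mul_nonneg hc20 (nsq_nonneg _)
    · show ∑ k, Wf (E k) = 1
      rw [Equiv.sum_comp E Wf, Fintype.sum_sum_type]
      have hS1 : ∑ θ : Fin d → ZMod 3, Wf (Sum.inl θ) = pr * d := by
        show ∑ θ : Fin d → ZMod 3, (pr / 3^d) * nsq (vv i₀ ψ θ) = pr * d
        rw [← Finset.mul_sum, sum_nsq_vv i₀ ψ hψ1]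
        field_simp
      have hS2 : ∑ bc : Fin d × Fin d, Wf (Sum.inr bc) = c2 * ((d:ℝ) - 1) := by
        show ∑ bc : Fin d × Fin d,
            (if bc.1 = bc.2 then (0:ℝ) else c2 * nsq (yv i₀ ψ bc.1 bc.2)) = _
        rw [Fintype.sum_prod_type]
        have h6 : ∀ b c : Fin d, (if b = c then (0:ℝ) else c2 * nsq (yv i₀ ψ b c))
            = c2 * (if b = c then 0 else nsq (yv i₀ ψ b c)) := by
          intro b c; split_ifs <;> ring
        rw [Finset.sum_congr rfl fun b _ => Finset.sum_congr rfl fun c _ => h6 b c]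
        rw [Finset.sum_congr rfl fun b (_ : b ∈ Finset.univ) =>
          (Finset.mul_sum _ _ _).symm, ← Finset.mul_sum, sum_nsq_yv i₀ ψ hψ1]
      rw [hS1, hS2, hc2]
      field_simp
      ring
    · intro k
      show UnitVec (Uf (E k)) ∧ IsBisepVec (Uf (E k))
      obtain θ | bc := E k
      · exact ⟨unit_nrm _ _ hueb.1, bisep_nrm (isBisep_vv i₀ i₁ hne ψ θ) hueb.2⟩
      · show UnitVec (if bc.1 = bc.2 then e0 else nrm (yv i₀ ψ bc.1 bc.2) e0) ∧
          IsBisepVec (if bc.1 = bc.2 then e0 else nrm (yv i₀ ψ bc.1 bc.2) e0)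
        split_ifs
        · exact hueb
        · exact ⟨unit_nrm _ _ hueb.1, bisep_nrm (isBisep_yv i₀ i₁ hne ψ _ _) hueb.2⟩
    · show chan i₀ ψ G σ = ∑ k, ((Wf (E k) : ℝ) : ℂ) • vecProj (Uf (E k))
      rw [Equiv.sum_comp E (fun j => ((Wf j : ℝ) : ℂ) • vecProj (Uf j)),
        Fintype.sum_sum_type]
      have hT1 : ∑ θ : Fin d → ZMod 3, ((Wf (Sum.inl θ) : ℝ) : ℂ) • vecProj (Uf (Sum.inl θ))
          = (((pr / 3^d : ℝ)) : ℂ) • ((3:ℂ)^d • (vecProj ψ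
              + ∑ b, ∑ c, if b = c then 0 else vecProj (yv i₀ ψ b c))) := by
        calc ∑ θ : Fin d → ZMod 3, ((Wf (Sum.inl θ) : ℝ) : ℂ) • vecProj (Uf (Sum.inl θ))
            = ∑ θ : Fin d → ZMod 3, (((pr / 3^d : ℝ)) : ℂ) • vecProj (vv i₀ ψ θ) :=
              Finset.sum_congr rfl fun θ _ =>
                weight_identity (pr / 3^d) (vv i₀ ψ θ) e0
          _ = (((pr / 3^d : ℝ)) : ℂ) • ∑ θ : Fin d → ZMod 3, vecProj (vv i₀ ψ θ) :=
              (Finset.smul_sum).symm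
          _ = _ := by rw [identity_I_mat i₀ ψ]
      have hT2 : ∑ bc : Fin d × Fin d, ((Wf (Sum.inr bc) : ℝ) : ℂ) • vecProj (Uf (Sum.inr bc))
          = ((c2 : ℝ) : ℂ) • (∑ b, ∑ c, if b = c then 0 else vecProj (yv i₀ ψ b c)) := by
        rw [Fintype.sum_prod_type, Finset.smul_sum]
        apply Finset.sum_congr rfl
        intro b _
        rw [Finset.smul_sum]
        apply Finset.sum_congr rfl
        intro c _
        by_cases hbc : b = c
        · show ((Wf (Sum.inr (b, c)) : ℝ) : ℂ) • vecProj (Uf (Sum.inr (b, c))) = _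
          have hw' : Wf (Sum.inr (b, c)) = 0 := by
            show (if b = c then (0:ℝ) else _) = 0
            rw [if_pos hbc]
          rw [hw', if_pos hbc]
          simp
        · show ((Wf (Sum.inr (b, c)) : ℝ) : ℂ) • vecProj (Uf (Sum.inr (b, c))) = _
          have hw' : Wf (Sum.inr (b, c)) = c2 * nsq (yv i₀ ψ b c) := by
            show (if b = c then (0:ℝ) else _) = _
            rw [if_neg hbc]
          have hu' : Uf (Sum.inr (b, c)) = nrm (yv i₀ ψ b c) e0 := by
            show (if b = c then e0 else _) = _
            rw [if_neg hbc]
          rw [hw', hu', if_neg hbc, weight_identity c2 (yv i₀ ψ b c) e0]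
      rw [hT1, hT2, chan_apply i₀ ψ G hd σ, hsG, htrQ]
      simp only [outer_eq_vecProj]
      rw [smul_smul]
      have hs1 : (((pr / 3^d : ℝ)) : ℂ) * (3:ℂ)^d = ((pr:ℝ):ℂ) := by
        push_cast
        field_simp
      rw [hs1, smul_add, add_assoc, ← add_smul]
      have hsc : (((((d:ℝ) - 1)⁻¹ : ℝ)):ℂ) * (1 - ((pr:ℝ):ℂ))
          = ((pr:ℝ):ℂ) + ((c2:ℝ):ℂ) := by
        have hdC : ((d:ℂ) - 1) ≠ 0 := by
          intro h
          apply hd1ne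
          have h2 : (((d:ℝ) - 1 : ℝ) : ℂ) = 0 := by push_cast; exact h
          exact_mod_cast h2
        rw [hc2]
        push_cast
        field_simp
        ring
      rw [hsc]
  · -- GHZ ↦ ψ
    show chan i₀ ψ G (vecProj G) = vecProj ψ
    rw [← outer_eq_vecProj, ← outer_eq_vecProj]
    exact chan_ghz i₀ ψ G hd hG1
end
end

section
/- The set of full separability-preserving operations is not included in the set of biseparability-preserving operations: there exists a CPTP map Λ on states of (ℂ²)^{⊗3} that is FSP but not BSP, i.e. Λ(σ) is fully separable for every fully separable state σ, yet Λ(τ) is not biseparable for some biseparable state τ. -/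
open Matrix Finset
open scoped ComplexOrder

attribute [local instance] Classical.propDecidable

noncomputable section

namespace FSPaux
attribute [-instance] Classical.propDecidable

abbrev Q3 := Fin 3 → Fin 2
abbrev Vec := Q3 → ℂ
abbrev Mat := Matrix Q3 Q3 ℂ

def outer (u v : Vec) : Mat := Matrix.of fun i j => u i * star (v j)

lemma vecProj_eq_outer (v : Vec) : vecProj v = outer v v := rfl

lemma outer_add_left (u u' v : Vec) : outer (u + u') v = outer u v + outer u' v := by
  ext i j; simp [outer, add_mul]

lemma outer_add_right (u v v' : Vec) : outer u (v + v') = outer u v + outer u v' := by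
  ext i j; simp [outer, mul_add]

lemma outer_sub_left (u u' v : Vec) : outer (u - u') v = outer u v - outer u' v := by
  ext i j; simp [outer, sub_mul]

lemma outer_sub_right (u v v' : Vec) : outer u (v - v') = outer u v - outer u v' := by
  ext i j; simp [outer, mul_sub]

lemma outer_smul_left (c : ℂ) (u v : Vec) : outer (c • u) v = c • outer u v := by
  ext i j; simp [outer, mul_assoc]

lemma outer_smul_right (c : ℂ) (u v : Vec) : outer u (c • v) = star c • outer u v := by
  ext i j; simp [outer]; ring

lemma outer_zero_left (v : Vec) : outer 0 v = 0 := by ext i j; simp [outer]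

def dv (x : Q3) : Vec := fun f => if f = x then 1 else 0

lemma sum_vecProj_dv : ∑ x : Q3, vecProj (dv x) = 1 := by
  ext i j
  rw [Matrix.sum_apply]
  simp only [vecProj, dv, Matrix.of_apply, Matrix.one_apply]
  have : ∀ x : Q3, (if i = x then (1:ℂ) else 0) * star (if j = x then (1:ℂ) else 0)
      = if x = i then (if i = j then (1:ℂ) else 0) else 0 := by
    intro x
    by_cases hx : x = i
    · subst hx
      by_cases hj : x = j
      · subst hj; simp
      · rw [if_pos rfl, if_pos rfl, if_neg (fun h : j = x => hj h.symm),
          if_neg (fun h : x = j => hj h)]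
        simp
    · rw [if_neg (fun h : i = x => hx h.symm), if_neg hx, zero_mul]
  simp only [this]
  rw [Finset.sum_ite_eq']
  simp

lemma trace_vecProj (u : Vec) : (vecProj u).trace = ∑ i, star (u i) * u i := by
  simp only [Matrix.trace, Matrix.diag, vecProj, Matrix.of_apply]
  exact Finset.sum_congr rfl fun i _ => mul_comm _ _

lemma trace_proj_mul (u v : Vec) :
    (vecProj u * vecProj v).trace = ((Complex.normSq (∑ i, star (v i) * u i) : ℝ) : ℂ) := by
  have h1 : (vecProj u * vecProj v).trace
      = (∑ k, u k * star (v k)) * (∑ l, v l * star (u l)) := by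
    rw [sum_mul_sum]
    simp only [Matrix.trace, Matrix.diag, Matrix.mul_apply, vecProj, Matrix.of_apply]
    exact Finset.sum_congr rfl fun k _ => Finset.sum_congr rfl fun l _ => by ring
  rw [h1]
  have h2 : (∑ k, u k * star (v k)) = ∑ i, star (v i) * u i :=
    Finset.sum_congr rfl fun i _ => mul_comm _ _
  have h3 : (∑ l, v l * star (u l)) = star (∑ i, star (v i) * u i) := by
    rw [star_sum]; exact Finset.sum_congr rfl fun i _ => by simp [star_mul']
  rw [h2, h3, Complex.star_def, Complex.mul_conj]

lemma lemA (u v : Vec) (ρ : Mat) :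
    outer u v * ρ * (outer u v)ᴴ = (ρ * vecProj v).trace • vecProj u := by
  ext i j
  simp only [Matrix.mul_apply, Matrix.conjTranspose_apply, outer, vecProj, Matrix.of_apply,
    Matrix.smul_apply, Matrix.trace, Matrix.diag, smul_eq_mul, star_mul', star_star,
    Finset.sum_mul, Finset.mul_sum]
  rw [Finset.sum_comm]
  exact Finset.sum_congr rfl fun l _ => Finset.sum_congr rfl fun k _ => by ring

lemma lemB (u v : Vec) :
    (outer u v)ᴴ * outer u v = (∑ i, star (u i) * u i) • vecProj v := by
  ext i j
  simp only [Matrix.mul_apply, Matrix.conjTranspose_apply, outer, vecProj, Matrix.of_apply,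
    Matrix.smul_apply, smul_eq_mul, star_mul', star_star, Finset.sum_mul]
  exact Finset.sum_congr rfl fun k _ => by ring

lemma vecProj_posSemidef (u : Vec) : (vecProj u).PosSemidef := by
  refine Matrix.posSemidef_iff_dotProduct_mulVec.mpr ⟨?_, ?_⟩
  · ext i j
    simp only [Matrix.conjTranspose_apply, vecProj, Matrix.of_apply, star_mul', star_star]
    ring
  · intro x
    have h : (star x) ⬝ᵥ ((vecProj u).mulVec x)
        = star (∑ j, star (u j) * x j) * (∑ j, star (u j) * x j) := by
      simp only [dotProduct, Matrix.mulVec, vecProj, Matrix.of_apply, dotProduct, Pi.star_apply,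
        star_sum, star_mul', star_star, Finset.sum_mul, Finset.mul_sum]
      rw [Finset.sum_comm]
      exact Finset.sum_congr rfl fun l _ => Finset.sum_congr rfl fun k _ => by ring
    rw [h]
    exact star_mul_self_nonneg _
end FSPaux

namespace FSPaux
-- scalar constants
def s2 : ℝ := (Real.sqrt 2)⁻¹
def c2 : ℂ := (s2 : ℝ)
def c3 : ℂ := ((Real.sqrt 3)⁻¹ : ℝ)
def c6 : ℂ := ((Real.sqrt 6)⁻¹ : ℝ)
def c8 : ℂ := c2 ^ 3

lemma star_c2 : star c2 = c2 := by simp [c2, Complex.star_def, Complex.conj_ofReal]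
lemma star_c3 : star c3 = c3 := by simp [c3, Complex.star_def, Complex.conj_ofReal]
lemma star_c6 : star c6 = c6 := by simp [c6, Complex.star_def, Complex.conj_ofReal]
lemma star_c8 : star c8 = c8 := by simp [c8, star_pow, star_c2]

lemma hc2 : c2 * c2 = 2⁻¹ := by
  rw [c2, ← Complex.ofReal_mul, s2, ← mul_inv, Real.mul_self_sqrt (by norm_num)]
  norm_num
lemma hc3 : c3 * c3 = 3⁻¹ := by
  rw [c3, ← Complex.ofReal_mul, ← mul_inv, Real.mul_self_sqrt (by norm_num)]
  norm_num
lemma hc6 : c6 * c6 = 6⁻¹ := by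
  rw [c6, ← Complex.ofReal_mul, ← mul_inv, Real.mul_self_sqrt (by norm_num)]
  norm_num
lemma hc8 : c8 * c8 = 8⁻¹ := by
  have : c8 * c8 = (c2 * c2) ^ 3 := by rw [c8]; ring
  rw [this, hc2]; norm_num

-- strings
def zz : Q3 := fun _ => 0
def oo : Q3 := fun _ => 1
def ww : Q3 := ![1,1,0]
def yv : Fin 6 → Q3 := ![![0,0,1], ![0,1,0], ![0,1,1], ![1,0,0], ![1,0,1], ![1,1,0]]
def xv : Fin 6 → Q3 := ![![0,0,1], ![0,1,0], ![0,1,1], ![1,0,0], ![1,0,1], ![1,1,1]]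

lemma zz_ne_oo : zz ≠ oo := by decide
lemma zz_ne_ww : zz ≠ ww := by decide

-- main vectors
def φv : Vec := c2 • (dv zz + dv ww)
def φm : Vec := c2 • (dv zz - dv ww)
def gv : Vec := c2 • (dv zz + dv oo)
def W0 : Vec := c3 • (dv zz + dv oo)
def W1 : Vec := c6 • (dv zz - dv oo)

def ex (a b : Fin 4) (f : Q3) : ℕ :=
  a.1 * (f 0).1 + b.1 * (f 1).1 + (8 - a.1 - b.1) * (f 2).1
def pv (a b : Fin 4) : Vec := fun f => c8 * Complex.I ^ (ex a b f)

-- helper for sums of deltas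
lemma sum_two_delta (A B : ℂ) (x y : Q3) (hxy : x ≠ y) :
    (∑ f : Q3, (if f = x then A else if f = y then B else 0)) = A + B := by
  have : ∀ f : Q3, (if f = x then A else if f = y then B else 0)
      = (if f = x then A else 0) + (if f = y then B else 0) := by
    intro f
    by_cases h1 : f = x
    · subst h1; simp [hxy]
    · by_cases h2 : f = y
      · subst h2; simp [h1]
      · simp [h1, h2]
  simp only [this, Finset.sum_add_distrib]
  rw [Finset.sum_ite_eq', Finset.sum_ite_eq']
  simp

-- unit and product lemmas
lemma unit_dv (x : Q3) : UnitVec (dv x) := by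
  unfold UnitVec dv
  have : ∀ f : Q3, star (if f = x then (1:ℂ) else 0) * (if f = x then (1:ℂ) else 0)
      = if f = x then (1:ℂ) else 0 := by intro f; by_cases h : f = x <;> simp [h]
  rw [Finset.sum_congr rfl fun f _ => this f, Finset.sum_ite_eq']
  simp

lemma prod_dv (x : Q3) : IsProdVec (dv x) := by
  refine ⟨fun j t => if t = x j then 1 else 0, fun f => ?_⟩
  by_cases h : f = x
  · subst h; simp [dv]
  · rw [dv, if_neg h]
    obtain ⟨j, hj⟩ := Function.ne_iff.mp h
    exact (Finset.prod_eq_zero (Finset.mem_univ j) (by simp [hj])).symm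

lemma unit_φv : UnitVec φv := by
  unfold UnitVec
  have : ∀ f : Q3, star (φv f) * φv f = if f = zz then (2⁻¹:ℂ) else if f = ww then 2⁻¹ else 0 := by
    intro f
    simp only [φv, Pi.smul_apply, Pi.add_apply, dv, smul_eq_mul]
    by_cases h1 : f = zz
    · subst h1
      rw [if_pos rfl, if_neg zz_ne_ww, if_pos rfl, add_zero, mul_one, star_c2, hc2]
    · by_cases h2 : f = ww
      · subst h2
        rw [if_neg h1, if_pos rfl, if_neg h1, if_pos rfl, zero_add, mul_one, star_c2, hc2]
      · rw [if_neg h1, if_neg h2, if_neg h1, if_neg h2]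
        simp
  rw [Finset.sum_congr rfl fun f _ => this f, sum_two_delta _ _ _ _ zz_ne_ww]
  norm_num

lemma unit_pv (a b : Fin 4) : UnitVec (pv a b) := by
  unfold UnitVec
  have hterm : ∀ f : Q3, star (pv a b f) * pv a b f = 8⁻¹ := by
    intro f
    have h1 : star (pv a b f) * pv a b f
        = (c8 * c8) * ((-Complex.I) * Complex.I) ^ (ex a b f) := by
      simp only [pv, star_mul', star_pow, star_c8, Complex.star_def, Complex.conj_I, mul_pow]
      ring
    rw [h1, hc8]
    simp [Complex.I_mul_I]
  rw [Finset.sum_congr rfl fun f _ => hterm f, Finset.sum_const]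
  rw [show (Finset.univ : Finset Q3).card = 8 from rfl]
  simp

open Complex

lemma prod_pv (a b : Fin 4) : IsProdVec (pv a b) := by
  refine ⟨![fun t : Fin 2 => c2 * Complex.I ^ (a.1 * t.1),
            fun t : Fin 2 => c2 * Complex.I ^ (b.1 * t.1),
            fun t : Fin 2 => c2 * Complex.I ^ ((8 - a.1 - b.1) * t.1)], fun f => ?_⟩
  rw [Fin.prod_univ_three]
  simp only [Matrix.cons_val_zero, Matrix.cons_val_one, Matrix.head_cons,
    Matrix.cons_val_two, Matrix.tail_cons]
  rw [show pv a b f = c8 * Complex.I ^ (a.1 * (f 0).1 + b.1 * (f 1).1 + (8 - a.1 - b.1) * (f 2).1) from rfl,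
    pow_add, pow_add, c8]
  ring

lemma geo4 (ζ : ℂ) (h4 : ζ ^ (4:ℕ) = 1) (h1 : ζ ≠ 1) : (1:ℂ) + ζ + ζ^2 + ζ^3 = 0 := by
  have h : (ζ - 1) * (1 + ζ + ζ^2 + ζ^3) = ζ^4 - 1 := by ring
  rw [h4, sub_self] at h
  rcases mul_eq_zero.mp h with h' | h'
  · exact absurd (sub_eq_zero.mp h') h1
  · exact h'

lemma I_pow_four' : Complex.I ^ (4:ℕ) = 1 := by
  rw [show (4:ℕ) = 2*2 from rfl, pow_mul, Complex.I_sq]; norm_num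

lemma I_pow_eight : Complex.I ^ (8:ℕ) = 1 := by
  rw [show (8:ℕ) = 4*2 from rfl, pow_mul, I_pow_four']; norm_num

lemma Izpow_pow4 (m : ℤ) : ((Complex.I) ^ m) ^ (4:ℕ) = 1 := by
  rw [← zpow_natCast ((Complex.I)^m) 4, ← _root_.zpow_mul, mul_comm, _root_.zpow_mul,
    show ((4:ℕ):ℤ) = ((4:ℕ):ℤ) from rfl, zpow_natCast, I_pow_four', _root_.one_zpow]

lemma Izpow_ne_one (m : ℤ) (h0 : m ≠ 0) (hl : -2 ≤ m) (hr : m ≤ 2) : (Complex.I) ^ m ≠ 1 := by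
  interval_cases m
  · rw [show (-2:ℤ) = -((2:ℕ):ℤ) by norm_num, _root_.zpow_neg, zpow_natCast, Complex.I_sq]
    norm_num
  · rw [show (-1:ℤ) = -((1:ℕ):ℤ) by norm_num, _root_.zpow_neg, zpow_natCast, pow_one, Complex.inv_I]
    simp [Complex.ext_iff]
  · exact absurd rfl h0
  · rw [zpow_one]
    simp [Complex.ext_iff]
  · rw [show (2:ℤ) = ((2:ℕ):ℤ) from rfl, zpow_natCast, Complex.I_sq]
    norm_num

def mi (i j : Q3) : ℤ := ((i 0).1:ℤ) - ((j 0).1:ℤ) - (((i 2).1:ℤ) - ((j 2).1:ℤ))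
def ni (i j : Q3) : ℤ := ((i 1).1:ℤ) - ((j 1).1:ℤ) - (((i 2).1:ℤ) - ((j 2).1:ℤ))

lemma cond_dec : ∀ i j : Q3, (mi i j = 0 ∧ ni i j = 0) ↔
    (i = j ∨ (i = zz ∧ j = oo) ∨ (i = oo ∧ j = zz)) := by decide

lemma mi_bound : ∀ i j : Q3, (-2 ≤ mi i j ∧ mi i j ≤ 2) ∧ (-2 ≤ ni i j ∧ ni i j ≤ 2) := by decide

lemma vecProj_pv_apply (a b : Fin 4) (i j : Q3) :
    vecProj (pv a b) i j
      = 8⁻¹ * ((Complex.I ^ (mi i j)) ^ (a.1) * (Complex.I ^ (ni i j)) ^ (b.1)) := by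
  have h1 : vecProj (pv a b) i j
      = (c8 * c8) * (Complex.I ^ (ex a b i) * (-Complex.I) ^ (ex a b j)) := by
    simp only [vecProj, Matrix.of_apply, pv, star_mul', star_pow, star_c8,
      Complex.star_def, Complex.conj_I]
    ring
  have h2 : (-Complex.I) ^ (ex a b j) = Complex.I ^ (-((ex a b j : ℕ) : ℤ)) := by
    rw [← Complex.inv_I, inv_pow, ← zpow_natCast, ← _root_.zpow_neg]
  have h3 : Complex.I ^ (ex a b i) * Complex.I ^ (-((ex a b j : ℕ):ℤ))
      = Complex.I ^ (((ex a b i : ℕ):ℤ) - ((ex a b j : ℕ):ℤ)) := by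
    rw [← zpow_natCast Complex.I (ex a b i), ← zpow_add₀ Complex.I_ne_zero]
    ring_nf
  have ha : a.1 ≤ 3 := Fin.is_le a
  have hb : b.1 ≤ 3 := Fin.is_le b
  have hcast : ((8 - a.1 - b.1 : ℕ) : ℤ) = 8 - (a.1:ℤ) - (b.1:ℤ) := by omega
  have hE : ((ex a b i : ℕ):ℤ) - ((ex a b j : ℕ):ℤ)
      = (a.1:ℤ) * mi i j + (b.1:ℤ) * ni i j + 8 * (((i 2).1:ℤ) - ((j 2).1:ℤ)) := by
    simp only [ex, mi, ni]
    push_cast [hcast]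
    ring
  have h4 : Complex.I ^ ((a.1:ℤ) * mi i j + (b.1:ℤ) * ni i j + 8 * (((i 2).1:ℤ) - ((j 2).1:ℤ)))
      = (Complex.I ^ (mi i j)) ^ (a.1) * (Complex.I ^ (ni i j)) ^ (b.1) := by
    rw [zpow_add₀ Complex.I_ne_zero, zpow_add₀ Complex.I_ne_zero]
    rw [mul_comm ((a.1:ℤ)) (mi i j), _root_.zpow_mul, zpow_natCast]
    rw [mul_comm ((b.1:ℤ)) (ni i j), _root_.zpow_mul, zpow_natCast]
    rw [_root_.zpow_mul, show ((8:ℤ)) = ((8:ℕ):ℤ) from rfl, zpow_natCast, I_pow_eight, _root_.one_zpow]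
    ring
  rw [h1, h2, h3, hE, h4, hc8]

lemma sum_pv : (∑ a : Fin 4, ∑ b : Fin 4, vecProj (pv a b))
    = (2:ℂ) • ((1 : Mat) + outer (dv zz) (dv oo) + outer (dv oo) (dv zz)) := by
  ext i j
  rw [Matrix.sum_apply]
  simp only [Matrix.sum_apply]
  rw [Finset.sum_congr rfl fun a _ => Finset.sum_congr rfl fun b _ => vecProj_pv_apply a b i j]
  have hfact : (∑ a : Fin 4, ∑ b : Fin 4,
        (8⁻¹:ℂ) * ((Complex.I ^ (mi i j)) ^ (a.1) * (Complex.I ^ (ni i j)) ^ (b.1)))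
      = 8⁻¹ * ((∑ a : Fin 4, (Complex.I ^ (mi i j)) ^ (a.1))
          * (∑ b : Fin 4, (Complex.I ^ (ni i j)) ^ (b.1))) := by
    rw [sum_mul_sum, Finset.mul_sum]
    exact Finset.sum_congr rfl fun a _ => by rw [Finset.mul_sum]
  rw [hfact]
  have hsum4 : ∀ m : ℤ, m = 0 → (∑ a : Fin 4, (Complex.I ^ m) ^ (a.1)) = 4 := by
    intro m hm; subst hm
    simp [Fin.sum_univ_four]
  have hsum0 : ∀ m : ℤ, m ≠ 0 → -2 ≤ m → m ≤ 2 →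
      (∑ a : Fin 4, (Complex.I ^ m) ^ (a.1)) = 0 := by
    intro m h0 hl hr
    have := geo4 (Complex.I ^ m) (Izpow_pow4 m) (Izpow_ne_one m h0 hl hr)
    rw [Fin.sum_univ_four]
    simpa using this
  by_cases hc : mi i j = 0 ∧ ni i j = 0
  · rw [hsum4 _ hc.1, hsum4 _ hc.2]
    rcases (cond_dec i j).mp hc with h | ⟨h1, h2⟩ | ⟨h1, h2⟩
    · subst h
      by_cases hi : i = zz
      · have hio : i ≠ oo := by rw [hi]; exact zz_ne_oo
        simp [Matrix.smul_apply, Matrix.add_apply, Matrix.one_apply, outer, dv, hio]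
        norm_num
      · simp [Matrix.smul_apply, Matrix.add_apply, Matrix.one_apply, outer, dv, hi]
        norm_num
    · subst h1; subst h2
      simp [Matrix.smul_apply, Matrix.add_apply, Matrix.one_apply, outer, dv,
        zz_ne_oo, Ne.symm zz_ne_oo]
      norm_num
    · subst h1; subst h2
      simp [Matrix.smul_apply, Matrix.add_apply, Matrix.one_apply, outer, dv,
        zz_ne_oo, Ne.symm zz_ne_oo]
      norm_num
  · have hd : ¬(i = j ∨ (i = zz ∧ j = oo) ∨ (i = oo ∧ j = zz)) :=
      fun hdj => hc ((cond_dec i j).mpr hdj)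
    have e1 : (1:Mat) i j = 0 := Matrix.one_apply_ne (fun h => hd (Or.inl h))
    have e2 : outer (dv zz) (dv oo) i j = 0 := by
      simp only [outer, Matrix.of_apply, dv]
      by_cases h1 : i = zz
      · by_cases h2 : j = oo
        · exact absurd (Or.inr (Or.inl ⟨h1, h2⟩)) hd
        · simp [h2]
      · simp [h1]
    have e3 : outer (dv oo) (dv zz) i j = 0 := by
      simp only [outer, Matrix.of_apply, dv]
      by_cases h1 : i = oo
      · by_cases h2 : j = zz
        · exact absurd (Or.inr (Or.inr ⟨h1, h2⟩)) hd
        · simp [h2]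
      · simp [h1]
    have hz : (8⁻¹:ℂ) * ((∑ a : Fin 4, (Complex.I ^ (mi i j)) ^ (a.1))
          * (∑ b : Fin 4, (Complex.I ^ (ni i j)) ^ (b.1))) = 0 := by
      rcases not_and_or.mp hc with h | h
      · rw [hsum0 _ h ((mi_bound i j).1.1) ((mi_bound i j).1.2)]; ring
      · rw [hsum0 _ h ((mi_bound i j).2.1) ((mi_bound i j).2.2)]; ring
    rw [hz]
    simp [Matrix.smul_apply, Matrix.add_apply, e1, e2, e3]
end FSPaux

namespace FSPaux
open Complex

lemma vecProj_zero : vecProj (0 : Vec) = 0 := by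
  ext i j; simp [vecProj]

lemma vecProj_smul (c : ℂ) (u : Vec) : vecProj (c • u) = (c * star c) • vecProj u := by
  ext i j; simp [vecProj]; ring

def e8a : Fin 8 → Q3 := ![zz, ww, xv 0, xv 1, xv 2, xv 3, xv 4, xv 5]
def e8b : Fin 8 → Q3 := ![zz, oo, yv 0, yv 1, yv 2, yv 3, yv 4, yv 5]

lemma bij_a : Function.Bijective e8a := by decide
lemma bij_b : Function.Bijective e8b := by decide

lemma one_split_a : vecProj (dv zz) + vecProj (dv ww) + vecProj (dv (xv 0)) + vecProj (dv (xv 1))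
    + vecProj (dv (xv 2)) + vecProj (dv (xv 3)) + vecProj (dv (xv 4)) + vecProj (dv (xv 5))
    = 1 := by
  rw [← sum_vecProj_dv,
    ← Fintype.sum_bijective e8a bij_a (fun t => vecProj (dv (e8a t))) (fun x => vecProj (dv x))
      (fun t => rfl),
    Fin.sum_univ_eight]
  rfl

lemma one_split_b : vecProj (dv zz) + vecProj (dv oo) + ∑ s : Fin 6, vecProj (dv (yv s))
    = 1 := by
  rw [← sum_vecProj_dv,
    ← Fintype.sum_bijective e8b bij_b (fun t => vecProj (dv (e8b t))) (fun x => vecProj (dv x))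
      (fun t => rfl),
    Fin.sum_univ_eight, Fin.sum_univ_six]
  have h2 : e8b 2 = yv 0 := rfl
  have h3 : e8b 3 = yv 1 := rfl
  have h4 : e8b 4 = yv 2 := rfl
  have h5 : e8b 5 = yv 3 := rfl
  have h6 : e8b 6 = yv 4 := rfl
  have h7 : e8b 7 = yv 5 := rfl
  rw [h2, h3, h4, h5, h6, h7]
  have h0 : e8b 0 = zz := rfl
  have h1 : e8b 1 = oo := rfl
  rw [h0, h1]
  abel

lemma vecProj_c_add (c : ℂ) (hc : star c = c) (u v : Vec) :
    vecProj (c • (u + v)) = (c * c) • (outer u u + outer u v + outer v u + outer v v) := by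
  rw [vecProj_smul, hc]
  congr 1
  rw [vecProj_eq_outer, outer_add_left, outer_add_right, outer_add_right]
  abel

lemma vecProj_c_sub (c : ℂ) (hc : star c = c) (u v : Vec) :
    vecProj (c • (u - v)) = (c * c) • (outer u u - outer u v - outer v u + outer v v) := by
  rw [vecProj_smul, hc]
  congr 1
  rw [vecProj_eq_outer, outer_sub_left, outer_sub_right, outer_sub_right]
  abel

lemma oneφ : vecProj φv + vecProj φm = vecProj (dv zz) + vecProj (dv ww) := by
  rw [φv, φm, vecProj_c_add c2 star_c2, vecProj_c_sub c2 star_c2, hc2,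
    vecProj_eq_outer, vecProj_eq_outer]
  module

def ρstar : Mat := (6⁻¹:ℂ) • (vecProj (dv zz) + vecProj (dv oo))
  + (24⁻¹:ℂ) • ∑ a : Fin 4, ∑ b : Fin 4, vecProj (pv a b)
def Zm : Mat := (6⁻¹:ℂ) • ∑ s : Fin 6, vecProj (dv (yv s))
def Xm : Mat := vecProj W0 + vecProj W1

lemma lemIII : Xm = (2:ℂ) • ρstar - Zm := by
  rw [Xm, ρstar, Zm, sum_pv, ← one_split_b, W0, W1,
    vecProj_c_add c3 star_c3, vecProj_c_sub c6 star_c6, hc3, hc6,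
    vecProj_eq_outer (dv zz), vecProj_eq_outer (dv oo)]
  module

def χv : Fin 8 → Vec := ![φv, φm, dv (xv 0), dv (xv 1), dv (xv 2), dv (xv 3), dv (xv 4), dv (xv 5)]
def Wov : Fin 8 → Fin 6 → Vec := fun t s =>
  if t = 0 then (if s = 0 then W0 else if s = 1 then W1 else 0) else c6 • dv (yv s)
def Kop (p : Fin 8 × Fin 6) : Mat := outer (Wov p.1 p.2) (χv p.1)
def Lam (ρ : Mat) : Mat :=
  (ρ * vecProj φv).trace • Xm + (ρ.trace - (ρ * vecProj φv).trace) • Zm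

lemma chi_complete : ∑ t : Fin 8, vecProj (χv t) = 1 := by
  rw [Fin.sum_univ_eight]
  have h0 : χv 0 = φv := rfl
  have h1 : χv 1 = φm := rfl
  have h2 : χv 2 = dv (xv 0) := rfl
  have h3 : χv 3 = dv (xv 1) := rfl
  have h4 : χv 4 = dv (xv 2) := rfl
  have h5 : χv 5 = dv (xv 3) := rfl
  have h6 : χv 6 = dv (xv 4) := rfl
  have h7 : χv 7 = dv (xv 5) := rfl
  rw [h0, h1, h2, h3, h4, h5, h6, h7, oneφ]
  exact one_split_a

lemma trace_lin (ρ : Mat) : ∑ t : Fin 8, (ρ * vecProj (χv t)).trace = ρ.trace := by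
  rw [← Matrix.trace_sum, ← Matrix.mul_sum, chi_complete, Matrix.mul_one]

lemma sum_Wov0 : ∑ s : Fin 6, vecProj (Wov 0 s) = Xm := by
  rw [Fin.sum_univ_six]
  have e0 : Wov 0 0 = W0 := rfl
  have e1 : Wov 0 1 = W1 := rfl
  have e2 : Wov 0 2 = 0 := rfl
  have e3 : Wov 0 3 = 0 := rfl
  have e4 : Wov 0 4 = 0 := rfl
  have e5 : Wov 0 5 = 0 := rfl
  rw [e0, e1, e2, e3, e4, e5, vecProj_zero, Xm]
  abel

lemma sum_Wovt (t : Fin 8) (ht : t ≠ 0) : ∑ s : Fin 6, vecProj (Wov t s) = Zm := by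
  have : ∀ s : Fin 6, vecProj (Wov t s) = (6⁻¹:ℂ) • vecProj (dv (yv s)) := by
    intro s
    rw [show Wov t s = c6 • dv (yv s) from if_neg ht, vecProj_smul, star_c6, hc6]
  rw [Finset.sum_congr rfl fun s _ => this s, ← Finset.smul_sum, Zm]

lemma kraus_eq (ρ : Mat) : Lam ρ = ∑ p : Fin 8 × Fin 6, Kop p * ρ * (Kop p)ᴴ := by
  rw [Fintype.sum_prod_type]
  have hstep : ∀ t : Fin 8, (∑ s : Fin 6, Kop (t, s) * ρ * (Kop (t, s))ᴴ)
      = (ρ * vecProj (χv t)).trace • (∑ s : Fin 6, vecProj (Wov t s)) := by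
    intro t
    rw [Finset.smul_sum]
    exact Finset.sum_congr rfl fun s _ => lemA _ _ _
  rw [Finset.sum_congr rfl fun t _ => hstep t]
  rw [Fin.sum_univ_eight, sum_Wov0,
    sum_Wovt 1 (by decide), sum_Wovt 2 (by decide), sum_Wovt 3 (by decide),
    sum_Wovt 4 (by decide), sum_Wovt 5 (by decide), sum_Wovt 6 (by decide),
    sum_Wovt 7 (by decide)]
  have hsum := trace_lin ρ
  rw [Fin.sum_univ_eight] at hsum
  have h0 : χv 0 = φv := rfl
  rw [h0] at hsum ⊢
  rw [Lam, show ρ.trace - (ρ * vecProj φv).trace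
      = (ρ * vecProj (χv 1)).trace + (ρ * vecProj (χv 2)).trace + (ρ * vecProj (χv 3)).trace
      + (ρ * vecProj (χv 4)).trace + (ρ * vecProj (χv 5)).trace + (ρ * vecProj (χv 6)).trace
      + (ρ * vecProj (χv 7)).trace from by rw [← hsum]; ring]
  module

lemma nv_W0 : ∑ i, star (W0 i) * W0 i = (2:ℂ) * 3⁻¹ := by
  have : ∀ f : Q3, star (W0 f) * W0 f = if f = zz then (3⁻¹:ℂ) else if f = oo then 3⁻¹ else 0 := by
    intro f
    simp only [W0, Pi.smul_apply, Pi.add_apply, dv, smul_eq_mul]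
    by_cases h1 : f = zz
    · subst h1
      rw [if_pos rfl, if_neg zz_ne_oo, if_pos rfl, add_zero, mul_one, star_c3, hc3]
    · by_cases h2 : f = oo
      · subst h2
        rw [if_neg h1, if_pos rfl, if_neg h1, if_pos rfl, zero_add, mul_one, star_c3, hc3]
      · rw [if_neg h1, if_neg h2, if_neg h1, if_neg h2]
        simp
  rw [Finset.sum_congr rfl fun f _ => this f, sum_two_delta _ _ _ _ zz_ne_oo]
  norm_num

lemma nv_W1 : ∑ i, star (W1 i) * W1 i = (3:ℂ)⁻¹ := by
  have : ∀ f : Q3, star (W1 f) * W1 f = if f = zz then (6⁻¹:ℂ) else if f = oo then 6⁻¹ else 0 := by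
    intro f
    simp only [W1, Pi.smul_apply, Pi.sub_apply, dv, smul_eq_mul]
    by_cases h1 : f = zz
    · subst h1
      rw [if_pos rfl, if_neg zz_ne_oo, if_pos rfl, sub_zero, mul_one, star_c6, hc6]
    · by_cases h2 : f = oo
      · subst h2
        rw [if_neg h1, if_pos rfl, if_neg h1, if_pos rfl, zero_sub, mul_neg_one,
          star_neg, star_c6, neg_mul_neg, hc6]
      · rw [if_neg h1, if_neg h2, if_neg h1, if_neg h2]
        simp
  rw [Finset.sum_congr rfl fun f _ => this f, sum_two_delta _ _ _ _ zz_ne_oo]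
  norm_num

lemma nv_zero : ∑ i, star ((0:Vec) i) * (0:Vec) i = 0 := by simp

lemma nv_c6dv (x : Q3) : ∑ i, star ((c6 • dv x) i) * (c6 • dv x) i = 6⁻¹ := by
  have : ∀ f : Q3, star ((c6 • dv x) f) * (c6 • dv x) f = if f = x then (6⁻¹:ℂ) else 0 := by
    intro f
    simp only [Pi.smul_apply, dv, smul_eq_mul]
    by_cases h : f = x
    · subst h; rw [if_pos rfl, if_pos rfl, mul_one, star_c6, hc6]
    · rw [if_neg h, if_neg h]; simp
  rw [Finset.sum_congr rfl fun f _ => this f, Finset.sum_ite_eq']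
  simp

lemma ksum : ∑ p : Fin 8 × Fin 6, (Kop p)ᴴ * Kop p = 1 := by
  rw [Fintype.sum_prod_type]
  have hstep : ∀ t : Fin 8, (∑ s : Fin 6, (Kop (t, s))ᴴ * Kop (t, s))
      = ∑ s : Fin 6, (∑ i, star (Wov t s i) * Wov t s i) • vecProj (χv t) :=
    fun t => Finset.sum_congr rfl fun s _ => lemB _ _
  rw [Finset.sum_congr rfl fun t _ => hstep t]
  have h0 : (∑ s : Fin 6, (∑ i, star (Wov 0 s i) * Wov 0 s i) • vecProj (χv 0))
      = vecProj (χv 0) := by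
    rw [Fin.sum_univ_six,
      show Wov 0 0 = W0 from rfl, show Wov 0 1 = W1 from rfl,
      show Wov 0 2 = 0 from rfl, show Wov 0 3 = 0 from rfl,
      show Wov 0 4 = 0 from rfl, show Wov 0 5 = 0 from rfl,
      nv_W0, nv_W1, nv_zero]
    rw [zero_smul, add_zero, add_zero, add_zero, add_zero, ← add_smul,
      show ((2:ℂ) * 3⁻¹ + 3⁻¹) = 1 by norm_num, one_smul]
  have ht : ∀ t : Fin 8, t ≠ 0 → (∑ s : Fin 6, (∑ i, star (Wov t s i) * Wov t s i) • vecProj (χv t))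
      = vecProj (χv t) := by
    intro t htne
    have : ∀ s : Fin 6, (∑ i, star (Wov t s i) * Wov t s i) = (6⁻¹:ℂ) := by
      intro s
      rw [show Wov t s = c6 • dv (yv s) from if_neg htne]
      exact nv_c6dv _
    rw [Finset.sum_congr rfl fun s _ => by rw [this s], ← Finset.sum_smul]
    rw [Finset.sum_const, show (Finset.univ : Finset (Fin 6)).card = 6 from rfl]
    norm_num
  rw [Fin.sum_univ_eight, h0, ht 1 (by decide), ht 2 (by decide), ht 3 (by decide),
    ht 4 (by decide), ht 5 (by decide), ht 6 (by decide), ht 7 (by decide)]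
  rw [← Fin.sum_univ_eight (fun t => vecProj (χv t))]
  exact chi_complete
end FSPaux

namespace FSPaux
open Complex

lemma star_mul_self_eq (z : ℂ) : star z * z = (Complex.normSq z : ℝ) := by
  rw [Complex.star_def, mul_comm, Complex.mul_conj]

lemma unit_normSq (u : Vec) (hu : UnitVec u) : ∑ f : Q3, Complex.normSq (u f) = 1 := by
  have h := hu
  unfold UnitVec at h
  rw [Finset.sum_congr rfl fun f _ => star_mul_self_eq (u f)] at h
  rw [← Complex.ofReal_sum] at h
  exact_mod_cast h

lemma dot_c_add (c : ℂ) (hc : star c = c) (x y : Q3) (hxy : x ≠ y) (u : Vec) :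
    (∑ i, star ((c • (dv x + dv y)) i) * u i) = c * (u x + u y) := by
  have hterm : ∀ i : Q3, star ((c • (dv x + dv y)) i) * u i
      = (if i = x then c * u i else 0) + (if i = y then c * u i else 0) := by
    intro i
    simp only [Pi.smul_apply, Pi.add_apply, dv, smul_eq_mul]
    by_cases h1 : i = x
    · subst h1
      rw [if_pos rfl, if_neg hxy, if_pos rfl, if_neg hxy, add_zero, mul_one, hc, add_zero]
    · by_cases h2 : i = y
      · subst h2
        rw [if_neg h1, if_pos rfl, if_neg h1, if_pos rfl, zero_add, mul_one, hc, zero_add]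
      · rw [if_neg h1, if_neg h2, if_neg h1, if_neg h2, add_zero]
        simp
  rw [Finset.sum_congr rfl fun i _ => hterm i, Finset.sum_add_distrib,
    Finset.sum_ite_eq', Finset.sum_ite_eq']
  simp
  ring

lemma normSq_c2 : Complex.normSq c2 = 2⁻¹ := by
  rw [c2, Complex.normSq_ofReal, s2, ← mul_inv, Real.mul_self_sqrt (by norm_num)]

lemma key_bound (u : Vec) (hu : UnitVec u) (hp : IsProdVec u) :
    Complex.normSq (∑ i, star (φv i) * u i) ≤ 2⁻¹ := by
  obtain ⟨ψ, hψ⟩ := hp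
  rw [φv, dot_c_add c2 star_c2 zz ww zz_ne_ww, Complex.normSq_mul, normSq_c2]
  have key : Complex.normSq (u zz + u ww) ≤ 1 := by
    have huR := unit_normSq u hu
    have hzw : u zz * u ww = u ![0,1,0] * u ![1,0,0] := by
      rw [hψ zz, hψ ww, hψ ![0,1,0], hψ ![1,0,0], Fin.prod_univ_three,
        Fin.prod_univ_three, Fin.prod_univ_three, Fin.prod_univ_three]
      have e1 : zz 0 = 0 := rfl
      have e2 : zz 1 = 0 := rfl
      have e3 : zz 2 = 0 := rfl
      have e4 : ww 0 = 1 := rfl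
      have e5 : ww 1 = 1 := rfl
      have e6 : ww 2 = 0 := rfl
      have e7 : (![0,1,0] : Q3) 0 = 0 := rfl
      have e8 : (![0,1,0] : Q3) 1 = 1 := rfl
      have e9 : (![0,1,0] : Q3) 2 = 0 := rfl
      have e10 : (![1,0,0] : Q3) 0 = 1 := rfl
      have e11 : (![1,0,0] : Q3) 1 = 0 := rfl
      have e12 : (![1,0,0] : Q3) 2 = 0 := rfl
      rw [e1, e2, e3, e4, e5, e6, e7, e8, e9, e10, e11, e12]
      ring
    have h1 : Complex.normSq (u zz + u ww)
        ≤ Complex.normSq (u zz) + Complex.normSq (u ww) + 2 * ‖u zz * u ww‖ := by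
      rw [Complex.normSq_add]
      have hre : (u zz * (starRingEnd ℂ) (u ww)).re ≤ ‖u zz * u ww‖ := by
        calc (u zz * (starRingEnd ℂ) (u ww)).re
            ≤ ‖u zz * (starRingEnd ℂ) (u ww)‖ := Complex.re_le_norm _
          _ = ‖u zz * u ww‖ := by rw [norm_mul, norm_mul, Complex.norm_conj]
      linarith
    have h2 : 2 * ‖u ![0,1,0] * u ![1,0,0]‖
        ≤ Complex.normSq (u ![0,1,0]) + Complex.normSq (u ![1,0,0]) := by
      rw [norm_mul, ← Complex.sq_norm (u ![0,1,0]), ← Complex.sq_norm (u ![1,0,0])]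
      have := two_mul_le_add_sq (‖u ![0,1,0]‖) (‖u ![1,0,0]‖)
      linarith
    have h4 : Complex.normSq (u zz) + Complex.normSq (u ww) + Complex.normSq (u ![0,1,0])
        + Complex.normSq (u ![1,0,0]) ≤ 1 := by
      rw [← huR]
      have hsum : (({zz, ww, ![0,1,0], ![1,0,0]} : Finset Q3).sum fun f => Complex.normSq (u f))
          = Complex.normSq (u zz) + Complex.normSq (u ww) + Complex.normSq (u ![0,1,0])
            + Complex.normSq (u ![1,0,0]) := by
        rw [Finset.sum_insert (by decide), Finset.sum_insert (by decide),
          Finset.sum_insert (by decide), Finset.sum_singleton]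
        ring
      have hle : (({zz, ww, ![0,1,0], ![1,0,0]} : Finset Q3).sum fun f => Complex.normSq (u f))
          ≤ ∑ f : Q3, Complex.normSq (u f) :=
        Finset.sum_le_sum_of_subset_of_nonneg (Finset.subset_univ _)
          (fun i _ _ => Complex.normSq_nonneg _)
      linarith
    rw [hzw] at h1
    linarith
  nlinarith [Complex.normSq_nonneg (u zz + u ww)]

lemma bisep_bound (u : Vec) (hu : UnitVec u) (hb : IsBisepVec u) :
    Complex.normSq (∑ i, star (gv i) * u i) ≤ 2⁻¹ := by
  obtain ⟨M, hMne, hMuniv, a, b, hab⟩ := hb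
  rw [gv, dot_c_add c2 star_c2 zz oo zz_ne_oo, Complex.normSq_mul, normSq_c2]
  have key : Complex.normSq (u zz + u oo) ≤ 1 := by
    set t0 : {j : Fin 3 // j ∈ M} → Fin 2 := fun j => zz j.1 with ht0
    set t1 : {j : Fin 3 // j ∈ M} → Fin 2 := fun j => oo j.1 with ht1
    set s0 : {j : Fin 3 // j ∉ M} → Fin 2 := fun j => zz j.1 with hs0
    set s1 : {j : Fin 3 // j ∉ M} → Fin 2 := fun j => oo j.1 with hs1
    set A := ∑ g : {j : Fin 3 // j ∈ M} → Fin 2, Complex.normSq (a g) with hA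
    set B := ∑ h : {j : Fin 3 // j ∉ M} → Fin 2, Complex.normSq (b h) with hB
    have hAB : A * B = 1 := by
      have huR := unit_normSq u hu
      have hfac : ∑ f : Q3, Complex.normSq (u f)
          = ∑ gh : ({j : Fin 3 // j ∈ M} → Fin 2) × ({j : Fin 3 // j ∉ M} → Fin 2),
              Complex.normSq (a gh.1) * Complex.normSq (b gh.2) := by
        refine Fintype.sum_equiv
          (Equiv.piEquivPiSubtypeProd (fun j : Fin 3 => j ∈ M) (fun _ => Fin 2)) _ _ fun f => ?_
        rw [hab f, Complex.normSq_mul]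
        rfl
      rw [huR, Fintype.sum_prod_type] at hfac
      dsimp only at hfac
      rw [hA, hB, sum_mul_sum]
      exact hfac.symm
    have hne01 : t0 ≠ t1 := by
      obtain ⟨j0, hj0⟩ := hMne
      intro h
      exact absurd (show (0 : Fin 2) = 1 from congrFun h ⟨j0, hj0⟩) (by decide)
    have hne01' : s0 ≠ s1 := by
      have : ∃ j, j ∉ M := by
        by_contra hcon
        push_neg at hcon
        exact hMuniv (Finset.eq_univ_iff_forall.mpr hcon)
      obtain ⟨j1, hj1⟩ := this
      intro h
      exact absurd (show (0 : Fin 2) = 1 from congrFun h ⟨j1, hj1⟩) (by decide)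
    have hA2 : Complex.normSq (a t0) + Complex.normSq (a t1) ≤ A := by
      have h1 : ({t0, t1} : Finset _).sum (fun g => Complex.normSq (a g))
          = Complex.normSq (a t0) + Complex.normSq (a t1) := Finset.sum_pair hne01
      rw [hA, ← h1]
      exact Finset.sum_le_sum_of_subset_of_nonneg (Finset.subset_univ _)
        (fun i _ _ => Complex.normSq_nonneg _)
    have hB2 : Complex.normSq (b s0) + Complex.normSq (b s1) ≤ B := by
      have h1 : ({s0, s1} : Finset _).sum (fun g => Complex.normSq (b g))
          = Complex.normSq (b s0) + Complex.normSq (b s1) := Finset.sum_pair hne01'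
      rw [hB, ← h1]
      exact Finset.sum_le_sum_of_subset_of_nonneg (Finset.subset_univ _)
        (fun i _ _ => Complex.normSq_nonneg _)
    have huzz : u zz = a t0 * b s0 := hab zz
    have huoo : u oo = a t1 * b s1 := hab oo
    set xa := ‖a t0‖ with hxa
    set xb := ‖a t1‖ with hxb
    set ya := ‖b s0‖ with hya
    set yb := ‖b s1‖ with hyb
    have habs : Complex.normSq (u zz + u oo) ≤ (xa * ya + xb * yb)^2 := by
      rw [← Complex.sq_norm]
      have htri : ‖u zz + u oo‖ ≤ xa * ya + xb * yb := by
        calc ‖u zz + u oo‖ ≤ ‖u zz‖ + ‖u oo‖ :=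
              norm_add_le _ _
          _ = xa * ya + xb * yb := by rw [huzz, huoo, norm_mul, norm_mul]
      exact pow_le_pow_left₀ (norm_nonneg _) htri 2
    have hA2' : xa^2 + xb^2 ≤ A := by
      rw [hxa, hxb, Complex.sq_norm, Complex.sq_norm]; exact hA2
    have hB2' : ya^2 + yb^2 ≤ B := by
      rw [hya, hyb, Complex.sq_norm, Complex.sq_norm]; exact hB2
    have hxy0 : (0:ℝ) ≤ xa := norm_nonneg _
    have hxy1 : (0:ℝ) ≤ xb := norm_nonneg _
    have hxy2 : (0:ℝ) ≤ ya := norm_nonneg _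
    have hxy3 : (0:ℝ) ≤ yb := norm_nonneg _
    have hmul : (xa^2 + xb^2) * (ya^2 + yb^2) ≤ A * B := by
      apply mul_le_mul hA2' hB2' (by positivity)
      calc (0:ℝ) ≤ xa^2 + xb^2 := by positivity
        _ ≤ A := hA2'
    nlinarith [sq_nonneg (xa * yb - xb * ya), hmul, hAB]
  nlinarith [Complex.normSq_nonneg (u zz + u oo)]
end FSPaux

namespace FSPaux
open Complex

lemma fullySep_of {κ : Type} [Fintype κ] (w : κ → ℝ) (u : κ → Vec) (ρ : Mat)
    (h0 : ∀ k, 0 ≤ w k) (h1 : ∑ k, w k = 1) (h2 : ∀ k, UnitVec (u k) ∧ IsProdVec (u k))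
    (hρ : ρ = ∑ k, (w k : ℂ) • vecProj (u k)) :
    FullySepState (fun _ : Fin 3 => Fin 2) ρ := by
  refine ⟨Fintype.card κ, w ∘ (Fintype.equivFin κ).symm, u ∘ (Fintype.equivFin κ).symm,
    fun k => h0 _, ?_, fun k => h2 _, ?_⟩
  · exact (Equiv.sum_comp (Fintype.equivFin κ).symm w).trans h1
  · rw [hρ]
    exact (Equiv.sum_comp (Fintype.equivFin κ).symm
      (fun k => (w k : ℂ) • vecProj (u k))).symm

lemma isCPTP_Lam : IsCPTP Lam := by
  refine ⟨Fintype.card (Fin 8 × Fin 6), Kop ∘ (Fintype.equivFin _).symm, fun ρ => ?_, ?_⟩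
  · rw [kraus_eq ρ]
    exact (Equiv.sum_comp (Fintype.equivFin _).symm
      (fun p => Kop p * ρ * (Kop p)ᴴ)).symm
  · exact (Equiv.sum_comp (Fintype.equivFin _).symm
      (fun p => (Kop p)ᴴ * Kop p)).trans ksum

lemma fin2 : ∀ t : Fin 2, t = 0 ∨ t = 1 := by decide

lemma eq_const_iff (f x : Q3) : f = x ↔ (f 0 = x 0 ∧ f 1 = x 1 ∧ f 2 = x 2) := by
  constructor
  · rintro rfl; exact ⟨rfl, rfl, rfl⟩
  · rintro ⟨h0, h1, h2⟩
    funext j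
    fin_cases j
    · exact h0
    · exact h1
    · exact h2

lemma bisep_φv : IsBisepVec φv := by
  refine ⟨{0, 1}, ⟨0, by decide⟩, by decide,
    fun g => c2 * ((if (g ⟨0, by decide⟩ = 0 ∧ g ⟨1, by decide⟩ = 0) then 1 else 0)
       + (if (g ⟨0, by decide⟩ = 1 ∧ g ⟨1, by decide⟩ = 1) then 1 else 0)),
    fun h => if h ⟨2, by decide⟩ = 0 then 1 else 0, fun f => ?_⟩
  simp only [φv, Pi.smul_apply, Pi.add_apply, dv, smul_eq_mul]
  rcases fin2 (f 0) with h0 | h0 <;> rcases fin2 (f 1) with h1 | h1 <;>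
    rcases fin2 (f 2) with h2 | h2 <;>
    simp only [eq_const_iff, h0, h1, h2, zz, ww, Matrix.cons_val_zero, Matrix.cons_val_one,
      Matrix.head_cons, Matrix.cons_val_two, Matrix.tail_cons] <;>
    norm_num

lemma bisep_tau : BisepState (fun _ : Fin 3 => Fin 2) (vecProj φv) := by
  refine ⟨1, fun _ => 1, fun _ => φv, fun k => by norm_num, by simp,
    fun k => ⟨unit_φv, bisep_φv⟩, ?_⟩
  simp

lemma lam_tau : Lam (vecProj φv) = Xm := by
  rw [Lam, trace_proj_mul, trace_vecProj,
    show (∑ i, star (φv i) * φv i) = 1 from unit_φv]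
  simp

lemma sqrt3_fact : (Real.sqrt 3)⁻¹ * (Real.sqrt 3)⁻¹ = 3⁻¹ := by
  rw [← mul_inv, Real.mul_self_sqrt (by norm_num)]

lemma W0_zz : W0 zz = c3 := by simp [W0, dv, zz_ne_oo]
lemma W0_oo : W0 oo = c3 := by simp [W0, dv, Ne.symm zz_ne_oo]
lemma W1_zz : W1 zz = c6 := by simp [W1, dv, zz_ne_oo]
lemma W1_oo : W1 oo = -c6 := by simp [W1, dv, Ne.symm zz_ne_oo]

lemma fid_Xm : (Xm * vecProj gv).trace = (((2:ℝ)/3 : ℝ) : ℂ) := by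
  rw [Xm, Matrix.add_mul, Matrix.trace_add, trace_proj_mul, trace_proj_mul]
  have h1 : (∑ i, star (gv i) * W0 i) = c2 * (c3 + c3) := by
    rw [gv, dot_c_add c2 star_c2 zz oo zz_ne_oo, W0_zz, W0_oo]
  have h2 : (∑ i, star (gv i) * W1 i) = 0 := by
    rw [gv, dot_c_add c2 star_c2 zz oo zz_ne_oo, W1_zz, W1_oo]
    ring
  rw [h1, h2]
  have hn1 : Complex.normSq (c2 * (c3 + c3)) = 2/3 := by
    rw [Complex.normSq_mul, normSq_c2]
    have hc : c3 + c3 = ((2 * (Real.sqrt 3)⁻¹ : ℝ) : ℂ) := by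
      rw [c3]; push_cast; ring
    rw [hc, Complex.normSq_ofReal]
    nlinarith [sqrt3_fact]
  rw [hn1]
  simp

lemma not_bisep_Xm : ¬ BisepState (fun _ : Fin 3 => Fin 2) Xm := by
  rintro ⟨m, w, u, hw0, hw1, hu, hrep⟩
  have htr : (Xm * vecProj gv).trace
      = ((∑ k, w k * Complex.normSq (∑ i, star (gv i) * u k i) : ℝ) : ℂ) := by
    rw [hrep, Matrix.sum_mul, Matrix.trace_sum]
    have : ∀ k, ((w k : ℂ) • vecProj (u k) * vecProj gv).trace
        = ((w k * Complex.normSq (∑ i, star (gv i) * u k i) : ℝ) : ℂ) := by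
      intro k
      rw [Matrix.smul_mul, Matrix.trace_smul, trace_proj_mul, smul_eq_mul]
      push_cast
      ring
    rw [Finset.sum_congr rfl fun k _ => this k, ← Complex.ofReal_sum]
  rw [fid_Xm] at htr
  have hreal : (2:ℝ)/3 = ∑ k, w k * Complex.normSq (∑ i, star (gv i) * u k i) :=
    Complex.ofReal_inj.mp htr
  have hbnd : (∑ k, w k * Complex.normSq (∑ i, star (gv i) * u k i)) ≤ 2⁻¹ := by
    calc (∑ k, w k * Complex.normSq (∑ i, star (gv i) * u k i))
        ≤ ∑ k, w k * 2⁻¹ := Finset.sum_le_sum fun k _ =>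
          mul_le_mul_of_nonneg_left (bisep_bound (u k) (hu k).1 (hu k).2) (hw0 k)
      _ = 2⁻¹ := by rw [← Finset.sum_mul, hw1, one_mul]
  linarith [hreal ▸ hbnd]

lemma lam_fsp : ∀ σ : Mat, IsState σ → FullySepState (fun _ : Fin 3 => Fin 2) σ →
    FullySepState (fun _ : Fin 3 => Fin 2) (Lam σ) := by
  intro σ _ hFS
  obtain ⟨m, wk, uk, hw0, hw1, hup, hrep⟩ := hFS
  set p : ℝ := ∑ k, wk k * Complex.normSq (∑ i, star (φv i) * uk k i) with hpdef
  have htrσ : σ.trace = 1 := by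
    rw [hrep, Matrix.trace_sum]
    have : ∀ k, ((wk k : ℂ) • vecProj (uk k)).trace = ((wk k : ℝ) : ℂ) := fun k => by
      rw [Matrix.trace_smul, trace_vecProj, (hup k).1, smul_eq_mul, mul_one]
    rw [Finset.sum_congr rfl fun k _ => this k, ← Complex.ofReal_sum, hw1, Complex.ofReal_one]
  have hF : (σ * vecProj φv).trace = (p : ℂ) := by
    rw [hrep, Matrix.sum_mul, Matrix.trace_sum]
    have : ∀ k, ((wk k : ℂ) • vecProj (uk k) * vecProj φv).trace
        = ((wk k * Complex.normSq (∑ i, star (φv i) * uk k i) : ℝ) : ℂ) := fun k => by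
      rw [Matrix.smul_mul, Matrix.trace_smul, trace_proj_mul, smul_eq_mul]
      push_cast
      ring
    rw [Finset.sum_congr rfl fun k _ => this k, ← Complex.ofReal_sum]
  have hp0 : 0 ≤ p :=
    Finset.sum_nonneg fun k _ => mul_nonneg (hw0 k) (Complex.normSq_nonneg _)
  have hp2 : p ≤ 2⁻¹ := by
    calc p ≤ ∑ k, wk k * 2⁻¹ := Finset.sum_le_sum fun k _ =>
        mul_le_mul_of_nonneg_left (key_bound (uk k) (hup k).1 (hup k).2) (hw0 k)
      _ = 2⁻¹ := by rw [← Finset.sum_mul, hw1, one_mul]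
  have hLam : Lam σ = (p:ℂ) • Xm + (1 - (p:ℂ)) • Zm := by rw [Lam, hF, htrσ]
  refine fullySep_of
    (Sum.elim (Sum.elim (fun _ : Fin 2 => p/3) (fun _ : Fin 4 × Fin 4 => p/12))
      (fun _ : Fin 6 => (1 - 2*p)/6))
    (Sum.elim (Sum.elim (![dv zz, dv oo]) (fun ab : Fin 4 × Fin 4 => pv ab.1 ab.2))
      (fun s : Fin 6 => dv (yv s)))
    (Lam σ) ?_ ?_ ?_ ?_
  · rintro ((k | ab) | s) <;> simp <;> linarith
  · rw [Fintype.sum_sum_type, Fintype.sum_sum_type]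
    simp only [Sum.elim_inl, Sum.elim_inr, Finset.sum_const, Finset.card_univ,
      Fintype.card_prod, Fintype.card_fin, nsmul_eq_mul]
    push_cast
    ring
  · rintro ((k | ab) | s)
    · fin_cases k
      · exact ⟨unit_dv zz, prod_dv zz⟩
      · exact ⟨unit_dv oo, prod_dv oo⟩
    · exact ⟨unit_pv ab.1 ab.2, prod_pv ab.1 ab.2⟩
    · exact ⟨unit_dv _, prod_dv _⟩
  · rw [hLam, lemIII, Fintype.sum_sum_type, Fintype.sum_sum_type, Fin.sum_univ_two]
    simp only [Sum.elim_inl, Sum.elim_inr, Matrix.cons_val_zero, Matrix.cons_val_one,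
      Matrix.head_cons]
    rw [← Finset.smul_sum, ← Finset.smul_sum, Fintype.sum_prod_type]
    dsimp only
    rw [ρstar, Zm]
    push_cast
    module
end FSPaux


/-- The set of full separability-preserving operations is not included in the set of
biseparability-preserving operations: there is a CPTP map on three qubits that maps
every fully separable state to a fully separable state, yet maps some biseparable state
to a state that is not biseparable. -/
theorem FSP_not_subset_BSP :
    ∃ Λ : Matrix (Fin 3 → Fin 2) (Fin 3 → Fin 2) ℂ →
          Matrix (Fin 3 → Fin 2) (Fin 3 → Fin 2) ℂ,
      IsCPTP Λ ∧
      (∀ σ, IsState σ → FullySepState (fun _ : Fin 3 => Fin 2) σ →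
        FullySepState (fun _ : Fin 3 => Fin 2) (Λ σ)) ∧
      ∃ τ, IsState τ ∧ BisepState (fun _ : Fin 3 => Fin 2) τ ∧
        ¬ BisepState (fun _ : Fin 3 => Fin 2) (Λ τ) := by
  refine ⟨FSPaux.Lam, FSPaux.isCPTP_Lam, FSPaux.lam_fsp, vecProj FSPaux.φv,
    ⟨FSPaux.vecProj_posSemidef _, by rw [FSPaux.trace_vecProj]; exact FSPaux.unit_φv⟩,
    FSPaux.bisep_tau, ?_⟩
  rw [FSPaux.lam_tau]
  exact FSPaux.not_bisep_Xm
end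
end
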